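/- arXiv:1203.3287 — 10 statements merged into one kernel-verified Lean document; each statement's English description precedes it below -/
import Mathlib

section
/- Let α > 2 be a real number and let ω > 0. Then ∫_{ℝ²} [1 − (‖x‖^α/(‖x‖^α + ω))²] dx = (1 + 2/α) · C_α · ω^{2/α}, where C_α = (2π/α)·Γ(2/α)·Γ(1 − 2/α). (The integrand equals 1 − 1/(1 + ω‖x‖^{−α})² for x ≠ 0.) -/
/-!
In polar coordinates the integral is `2π ∫₀^∞ r (1 - (r^α / (r^α + ω))²) dr`, and the substitution
`r^α = ω y` turns it into `(2π / α) ω^{2/α} ∫₀^∞ y^{s-1} (2 / (1 + y) - 1 / (1 + y)²) dy` with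
`s = 2 / α ∈ (0, 1)`. The two pieces are the Beta integrals `B(s, 1 - s) = Γ(s) Γ(1 - s)` and
`B(s, 2 - s) = (1 - s) Γ(s) Γ(1 - s)`, so the bracket is `(1 + s) Γ(s) Γ(1 - s)`. The Beta integral
over `(0, ∞)` is reduced to the one over `(0, 1)` by `x = t / (1 - t)`.
-/

open MeasureTheory Real Set

section Beta

variable {a b : ℝ}

lemma ofReal_betaIntegrand {t : ℝ} (ht : t ∈ Ioo 0 1) :
    (t : ℂ) ^ ((a : ℂ) - 1) * (1 - (t : ℂ)) ^ ((b : ℂ) - 1) =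
      ((t ^ (a - 1) * (1 - t) ^ (b - 1) : ℝ) : ℂ) := by
  rw [Complex.ofReal_mul, Complex.ofReal_cpow ht.1.le,
    Complex.ofReal_cpow (sub_nonneg.mpr ht.2.le)]
  push_cast
  rfl

lemma integrableOn_betaIntegrand (ha : 0 < a) (hb : 0 < b) :
    IntegrableOn (fun t : ℝ ↦ t ^ (a - 1) * (1 - t) ^ (b - 1)) (Ioo 0 1) := by
  have hc := Complex.betaIntegral_convergent (u := a) (v := b) (by simpa) (by simpa)
  rw [intervalIntegrable_iff_integrableOn_Ioc_of_le zero_le_one] at hc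
  refine IntegrableOn.congr_fun (hc.mono_set Ioo_subset_Ioc_self).re (fun t ht ↦ ?_)
    measurableSet_Ioo
  rw [ofReal_betaIntegrand ht]
  exact Complex.ofReal_re _

lemma integral_betaIntegrand (ha : 0 < a) (hb : 0 < b) :
    ∫ t in Ioo 0 1, t ^ (a - 1) * (1 - t) ^ (b - 1) = Gamma a * Gamma b / Gamma (a + b) := by
  have h := Complex.Gamma_mul_Gamma_eq_betaIntegral (s := a) (t := b) (by simpa) (by simpa)
  rw [Complex.betaIntegral, intervalIntegral.integral_of_le zero_le_one,
    integral_Ioc_eq_integral_Ioo, setIntegral_congr_fun measurableSet_Ioo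
      (fun t ht ↦ ofReal_betaIntegrand ht), integral_complex_ofReal, ← Complex.ofReal_add] at h
  simp only [Complex.Gamma_ofReal] at h
  norm_cast at h
  rw [h, mul_div_cancel_left₀ _ (Gamma_pos_of_pos (add_pos ha hb)).ne']

end Beta

lemma image_div_one_sub_Ioo : (fun t : ℝ ↦ t / (1 - t)) '' Ioo 0 1 = Ioi 0 := by
  ext x
  constructor
  · rintro ⟨t, ⟨ht0, ht1⟩, rfl⟩
    exact div_pos ht0 (sub_pos.mpr ht1)
  · intro (hx : 0 < x)
    refine ⟨x / (1 + x), ⟨by positivity, (div_lt_one (by positivity)).mpr (by linarith)⟩, ?_⟩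
    field_simp
    ring

lemma hasDerivWithinAt_div_one_sub {t : ℝ} (ht : t ≠ 1) (s : Set ℝ) :
    HasDerivWithinAt (fun t : ℝ ↦ t / (1 - t)) ((1 - t) ^ 2)⁻¹ s t := by
  have h1t : 1 - t ≠ 0 := sub_ne_zero.mpr (Ne.symm ht)
  have h := (hasDerivAt_id' t).div ((hasDerivAt_id' t).const_sub 1) h1t
  rw [show (1 * (1 - t) - t * -1) / (1 - t) ^ 2 = ((1 - t) ^ 2)⁻¹ by ring] at h
  exact h.hasDerivWithinAt

lemma injOn_div_one_sub : InjOn (fun t : ℝ ↦ t / (1 - t)) (Ioo 0 1) := by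
  intro x hx y hy h
  have : 1 - x ≠ 0 := (sub_pos.mpr hx.2).ne'
  have : 1 - y ≠ 0 := (sub_pos.mpr hy.2).ne'
  field_simp at h
  linarith

lemma abs_deriv_smul_div_one_sub (a c : ℝ) {t : ℝ} (ht : t ∈ Ioo 0 1) :
    |((1 - t) ^ 2)⁻¹| • ((t / (1 - t)) ^ (a - 1) * (1 + t / (1 - t)) ^ (-c)) =
      t ^ (a - 1) * (1 - t) ^ (c - a - 1) := by
  have h1t : 0 < 1 - t := sub_pos.mpr ht.2
  have hsum : 1 + t / (1 - t) = (1 - t)⁻¹ := by field_simp; ring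
  rw [smul_eq_mul, abs_of_pos (by positivity), hsum, inv_rpow h1t.le, rpow_neg h1t.le, inv_inv,
    div_rpow ht.1.le h1t.le, show c - a - 1 = -2 + -(a - 1) + c by ring, rpow_add h1t,
    rpow_add h1t, rpow_neg h1t.le (a - 1), rpow_neg h1t.le 2, rpow_two]
  ring

section BetaIoi

variable {a c : ℝ}

lemma integrableOn_rpow_mul_one_add_rpow_neg (ha : 0 < a) (hac : a < c) :
    IntegrableOn (fun x : ℝ ↦ x ^ (a - 1) * (1 + x) ^ (-c)) (Ioi 0) := by
  rw [← image_div_one_sub_Ioo, integrableOn_image_iff_integrableOn_abs_deriv_smul measurableSet_Ioo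
    (fun t ht ↦ hasDerivWithinAt_div_one_sub ht.2.ne _) injOn_div_one_sub]
  exact (integrableOn_betaIntegrand ha (sub_pos.mpr hac)).congr_fun
    (fun t ht ↦ (abs_deriv_smul_div_one_sub a c ht).symm) measurableSet_Ioo

lemma integral_rpow_mul_one_add_rpow_neg (ha : 0 < a) (hac : a < c) :
    ∫ x in Ioi 0, x ^ (a - 1) * (1 + x) ^ (-c) = Gamma a * Gamma (c - a) / Gamma c := by
  rw [← image_div_one_sub_Ioo, integral_image_eq_integral_abs_deriv_smul measurableSet_Ioo
    (fun t ht ↦ hasDerivWithinAt_div_one_sub ht.2.ne _) injOn_div_one_sub,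
    setIntegral_congr_fun measurableSet_Ioo (fun t ht ↦ abs_deriv_smul_div_one_sub a c ht),
    integral_betaIntegrand ha (sub_pos.mpr hac), add_sub_cancel]

end BetaIoi

lemma integral_rpow_mul_one_sub_div_add_one_sq {s : ℝ} (hs0 : 0 < s) (hs1 : s < 1) :
    ∫ y in Ioi 0, y ^ (s - 1) * (1 - (y / (y + 1)) ^ 2) = (1 + s) * (Gamma s * Gamma (1 - s)) := by
  have hsplit : ∀ y ∈ Ioi (0 : ℝ), y ^ (s - 1) * (1 - (y / (y + 1)) ^ 2) =
      2 * (y ^ (s - 1) * (1 + y) ^ (-1 : ℝ)) - y ^ (s - 1) * (1 + y) ^ (-2 : ℝ) := by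
    intro y (hy : 0 < y)
    have : 0 < 1 + y := by linarith
    rw [rpow_neg_one, rpow_neg this.le, rpow_two]
    field_simp
    ring
  rw [setIntegral_congr_fun measurableSet_Ioi hsplit,
    integral_sub ((integrableOn_rpow_mul_one_add_rpow_neg hs0 hs1).const_mul 2)
      (integrableOn_rpow_mul_one_add_rpow_neg hs0 (by linarith)),
    integral_const_mul, integral_rpow_mul_one_add_rpow_neg hs0 hs1,
    integral_rpow_mul_one_add_rpow_neg hs0 (by linarith), show (2 : ℝ) - s = 1 - s + 1 by ring,
    Gamma_add_one (by linarith), Gamma_one, Gamma_two]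
  ring

section Substitution

variable {E : Type*} [NormedAddCommGroup E] [NormedSpace ℝ E]

lemma integral_fun_norm_euclideanSpace_fin_two (f : ℝ → E) :
    ∫ x : EuclideanSpace ℝ (Fin 2), f ‖x‖ = (2 * π) • ∫ r in Ioi 0, r • f r := by
  rw [integral_fun_norm_addHaar, finrank_euclideanSpace_fin, measureReal_def,
    EuclideanSpace.volume_ball_fin_two]
  simp [pi_pos.le, mul_smul, ofNat_smul_eq_nsmul]

lemma integral_smul_comp_rpow_Ioi (g : ℝ → E) {α : ℝ} (hα : 0 < α) :
    ∫ x in Ioi 0, x • g (x ^ α) = α⁻¹ • ∫ y in Ioi 0, y ^ (2 / α - 1) • g y := by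
  rw [← integral_comp_rpow_Ioi_of_pos (g := fun y ↦ y ^ (2 / α - 1) • g y) hα, ← integral_smul]
  refine setIntegral_congr_fun measurableSet_Ioi fun x (hx : 0 < x) ↦ ?_
  rw [smul_smul, smul_smul, ← rpow_mul hx.le, inv_mul_cancel_left₀ hα.ne',
    ← rpow_add hx, show α - 1 + α * (2 / α - 1) = 1 by field_simp; ring, rpow_one]

lemma integral_rpow_smul_comp_div_Ioi (h : ℝ → E) (s : ℝ) {ω : ℝ} (hω : 0 < ω) :
    ∫ y in Ioi 0, y ^ (s - 1) • h (y / ω) = ω ^ s • ∫ u in Ioi 0, u ^ (s - 1) • h u := by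
  have hscale := integral_comp_mul_right_Ioi (fun u ↦ u ^ (s - 1) • h u) 0 (inv_pos.mpr hω)
  rw [zero_mul, inv_inv] at hscale
  calc ∫ y in Ioi 0, y ^ (s - 1) • h (y / ω)
      = ∫ y in Ioi 0, ω ^ (s - 1) • ((y * ω⁻¹) ^ (s - 1) • h (y * ω⁻¹)) := by
        refine setIntegral_congr_fun measurableSet_Ioi fun y (hy : 0 < y) ↦ ?_
        rw [smul_smul, mul_rpow hy.le (inv_pos.mpr hω).le, inv_rpow hω.le, mul_left_comm,
          mul_inv_cancel₀ (rpow_pos_of_pos hω _).ne', mul_one, div_eq_mul_inv]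
    _ = ω ^ s • ∫ u in Ioi 0, u ^ (s - 1) • h u := by
        rw [integral_smul, hscale, smul_smul, ← rpow_add_one hω.ne', sub_add_cancel]

end Substitution

theorem stmt_1 (α ω : ℝ) (hα : 2 < α) (hω : 0 < ω) :
    (∫ x : EuclideanSpace ℝ (Fin 2),
        (1 - (‖x‖ ^ α / (‖x‖ ^ α + ω)) ^ 2)) =
      (1 + 2 / α) * ((2 * π / α) * Gamma (2 / α) * Gamma (1 - 2 / α)) * ω ^ (2 / α) := by
  have hα0 : 0 < α := by linarith
  have hs1 : 2 / α < 1 := (div_lt_one hα0).mpr hα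
  have hnormalize : ∀ y, y / (y + ω) = y / ω / (y / ω + 1) := fun y ↦ by field_simp
  rw [integral_fun_norm_euclideanSpace_fin_two (fun r ↦ 1 - (r ^ α / (r ^ α + ω)) ^ 2),
    integral_smul_comp_rpow_Ioi (fun y ↦ 1 - (y / (y + ω)) ^ 2) hα0]
  simp only [hnormalize]
  rw [integral_rpow_smul_comp_div_Ioi (fun u ↦ 1 - (u / (u + 1)) ^ 2) _ hω]
  simp only [smul_eq_mul]
  rw [integral_rpow_mul_one_sub_div_add_one_sq (by positivity) hs1]
  field_simp
end

section
/- Let r and d be nonzero vectors in ℝ² and let θ ∈ [0, π] be the angle between them, i.e. cos θ = ⟨r, d⟩/(‖r‖·‖d‖). Then ‖r − d‖ ≤ |‖d‖ − ‖r‖| + 2·min(‖d‖, ‖r‖)·sin(θ/2). -/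
/-! The law of cosines together with `cos θ = 1 - 2 sin² (θ/2)` gives
`‖r - d‖² = (‖d‖ - ‖r‖)² + 4 ‖r‖ ‖d‖ sin² (θ/2)`.  Writing `a ≤ b` for the two norms and
`s = sin (θ/2) ∈ [0, 1]`, the square of the right-hand side exceeds this by
`4 a (b - a) (s - s²) ≥ 0`. -/

open Real RealInnerProductSpace

lemma sq_sub_add_four_mul_sq_le (a b s : ℝ) (ha : 0 ≤ a) (hb : 0 ≤ b) (hs₀ : 0 ≤ s)
    (hs₁ : s ≤ 1) :
    (b - a) ^ 2 + 4 * a * b * s ^ 2 ≤ (|b - a| + 2 * min b a * s) ^ 2 := by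
  have hss : 0 ≤ s - s ^ 2 := by nlinarith
  rcases le_total a b with hab | hba
  · rw [abs_of_nonneg (sub_nonneg.mpr hab), min_eq_right hab]
    nlinarith [mul_nonneg (mul_nonneg ha (sub_nonneg.mpr hab)) hss]
  · rw [abs_of_nonpos (sub_nonpos.mpr hba), min_eq_left hba]
    nlinarith [mul_nonneg (mul_nonneg hb (sub_nonneg.mpr hba)) hss]

lemma norm_sub_sq_eq_of_inner_eq_mul_cos {E : Type*} [NormedAddCommGroup E]
    [InnerProductSpace ℝ E] {r d : E} {θ : ℝ} (h : ⟪r, d⟫ = ‖r‖ * ‖d‖ * cos θ) :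
    ‖r - d‖ ^ 2 = (‖d‖ - ‖r‖) ^ 2 + 4 * ‖r‖ * ‖d‖ * sin (θ / 2) ^ 2 := by
  have hcos : cos θ = 1 - 2 * sin (θ / 2) ^ 2 := by
    rw [← cos_two_mul_eq_one_sub, mul_div_cancel₀ θ two_ne_zero]
  rw [norm_sub_sq_real, h, hcos]
  ring

lemma norm_sub_le_of_inner_eq_mul_cos {E : Type*} [NormedAddCommGroup E]
    [InnerProductSpace ℝ E] {r d : E} {θ : ℝ} (hθ : θ ∈ Set.Icc 0 π)
    (h : ⟪r, d⟫ = ‖r‖ * ‖d‖ * cos θ) :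
    ‖r - d‖ ≤ |‖d‖ - ‖r‖| + 2 * min ‖d‖ ‖r‖ * sin (θ / 2) := by
  have hs₀ : 0 ≤ sin (θ / 2) := sin_nonneg_of_nonneg_of_le_pi (by linarith [hθ.1])
    (by linarith [hθ.2, pi_pos])
  refine (pow_le_pow_iff_left₀ (norm_nonneg _) (by positivity) two_ne_zero).mp ?_
  rw [norm_sub_sq_eq_of_inner_eq_mul_cos h]
  exact sq_sub_add_four_mul_sq_le _ _ _ (norm_nonneg r) (norm_nonneg d) hs₀ (sin_le_one _)

theorem stmt_5 (r d : EuclideanSpace ℝ (Fin 2)) (hr : r ≠ 0) (hd : d ≠ 0)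
    (θ : ℝ) (hθ : θ ∈ Set.Icc 0 π)
    (hcos : cos θ = ⟪r, d⟫ / (‖r‖ * ‖d‖)) :
    ‖r - d‖ ≤ |‖d‖ - ‖r‖| + 2 * min ‖d‖ ‖r‖ * sin (θ / 2) := by
  have hrd : ‖r‖ * ‖d‖ ≠ 0 := mul_ne_zero (norm_ne_zero_iff.mpr hr) (norm_ne_zero_iff.mpr hd)
  refine norm_sub_le_of_inner_eq_mul_cos hθ ?_
  rw [hcos, mul_div_cancel₀ _ hrd]
end

section
/- Let α ≥ 2 be a real number and let u > 0 with u ≠ 1. Then (1 − u²)/(1 − u^α) ≥ 1 + (2/α − 1)·u. -/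
/-!
Multiplying out, `(1 - u²) - (1 + (2/α - 1) u)(1 - u^α) = (u/α) (f 1 - f u)` with
`f x = α x + (α - 2) x^α - α x^(α-1)`. Since `f' x = α (1 + (α - 2) x^(α-1) - (α - 1) x^(α-2))`
is nonnegative by the weighted AM-GM inequality, `f` is monotone on `(0, ∞)`, so `f 1 - f u`
has the sign of `1 - u`, which is the sign of the denominator `1 - u^α`.
-/

open Real Set

lemma mul_rpow_sub_one_le (p x : ℝ) (hp : 1 ≤ p) (hx : 0 ≤ x) :
    p * x ^ (p - 1) ≤ (p - 1) * x ^ p + 1 := by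
  have hp0 : 0 < p := by linarith
  have amgm := geom_mean_le_arith_mean2_weighted (w₁ := (p - 1) / p) (w₂ := 1 / p)
    (p₁ := x ^ p) (p₂ := 1) (by positivity) (by positivity) (by positivity) zero_le_one
    (by field_simp; ring)
  rw [one_rpow, mul_one, ← rpow_mul hx, mul_div_cancel₀ _ hp0.ne'] at amgm
  calc p * x ^ (p - 1) ≤ p * ((p - 1) / p * x ^ p + 1 / p * 1) := by gcongr
    _ = (p - 1) * x ^ p + 1 := by field_simp

lemma monotoneOn_mul_add_rpow_sub_rpow (α : ℝ) (hα : 2 ≤ α) :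
    MonotoneOn (fun x : ℝ ↦ α * x + (α - 2) * x ^ α - α * x ^ (α - 1)) (Ioi 0) := by
  have hderiv : ∀ x ∈ Ioi (0 : ℝ),
      HasDerivAt (fun x : ℝ ↦ α * x + (α - 2) * x ^ α - α * x ^ (α - 1))
        (α * 1 + (α - 2) * (α * x ^ (α - 1)) - α * ((α - 1) * x ^ (α - 1 - 1))) x := fun x hx ↦
    (((hasDerivAt_id x).const_mul α).add
      ((hasDerivAt_rpow_const (Or.inl hx.ne')).const_mul (α - 2))).sub
      ((hasDerivAt_rpow_const (Or.inl hx.ne')).const_mul α)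
  refine monotoneOn_of_hasDerivWithinAt_nonneg (convex_Ioi 0)
    (fun x hx ↦ (hderiv x hx).continuousAt.continuousWithinAt)
    (fun x hx ↦ (hderiv x (interior_subset hx)).hasDerivWithinAt) (fun x hx ↦ ?_)
  rw [interior_Ioi] at hx
  have h := mul_rpow_sub_one_le (α - 1) x (by linarith) hx.le
  rw [show α - 1 - 1 = α - 2 by ring] at h ⊢
  nlinarith

lemma one_sub_sq_sub_mul_one_sub_rpow (α u : ℝ) (hα : α ≠ 0) (hu : 0 < u) :
    (1 - u ^ 2) - (1 + (2 / α - 1) * u) * (1 - u ^ α) =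
      u / α * ((α - 2) - (α * u + (α - 2) * u ^ α - α * u ^ (α - 1))) := by
  rw [rpow_sub_one hu.ne']
  field_simp
  ring

theorem stmt_6 (α u : ℝ) (hα : 2 ≤ α) (hu : 0 < u) (hu1 : u ≠ 1) :
    1 + (2 / α - 1) * u ≤ (1 - u ^ 2) / (1 - u ^ α) := by
  have hα0 : 0 < α := by linarith
  have hid := one_sub_sq_sub_mul_one_sub_rpow α u hα0.ne' hu
  have hmono := monotoneOn_mul_add_rpow_sub_rpow α hα
  have hcoef : 0 ≤ u / α := by positivity
  rcases hu1.lt_or_gt with hlt | hgt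
  · have hle := hmono hu (mem_Ioi.2 one_pos) hlt.le
    simp only [one_rpow, mul_one] at hle
    rw [le_div_iff₀ (sub_pos.2 (rpow_lt_one hu.le hlt hα0))]
    nlinarith
  · have hle := hmono (mem_Ioi.2 one_pos) hu hgt.le
    simp only [one_rpow, mul_one] at hle
    rw [le_div_iff_of_neg (sub_neg.2 (one_lt_rpow hgt hα0))]
    nlinarith
end

section
/- Let σ > 0 and d ∈ ℝ² with D = ‖d‖. Define I₀(z) = (1/π)·∫₀^π e^{z·cos t} dt. Then ∫_{ℝ²} ‖x − d‖ · (1/(2πσ²)) · e^{−‖x‖²/(2σ²)} dx = ∫₀^∞ (u²/σ²) · e^{−(u² + D²)/(2σ²)} · I₀(D·u/σ²) du. -/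
/-!
The reflection `x ↦ d - x` turns the left side into the integral of `‖x‖` against the Gaussian
centred at `d`. A linear isometry onto `ℂ` taking `d` to the positive real `D`, followed by polar
coordinates `z = r e^{iθ}`, gives `‖z - D‖² = r² + D² - 2rD cos θ`, so the Gaussian factors as
`e^{-(r² + D²)/(2σ²)} e^{(Dr/σ²) cos θ}`, and the angular integral of the second factor over
`(-π, π)` is `2π I₀(Dr/σ²)`. All integrands are nonnegative, so Tonelli justifies the iterated
integral without any integrability estimate.
-/

open MeasureTheory Real

/-- Modified Bessel function of the first kind of order 0 (integral representation). -/
noncomputable def besselI0 (z : ℝ) : ℝ := (1 / π) * ∫ t in (0:ℝ)..π, exp (z * cos t)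

open Set

theorem exists_linearIsometryEquiv_complex_apply_eq_norm {E : Type*} [NormedAddCommGroup E]
    [InnerProductSpace ℝ E] (hE : Module.finrank ℝ E = 2) (d : E) :
    ∃ L : E ≃ₗᵢ[ℝ] ℂ, L d = ‖d‖ := by
  have : FiniteDimensional ℝ E := Module.finite_of_finrank_eq_succ hE
  let L₀ : E ≃ₗᵢ[ℝ] ℂ := ((stdOrthonormalBasis ℝ E).reindex (finCongr hE)).repr.trans
    Complex.orthonormalBasisOneI.repr.symm
  refine ⟨L₀.trans (rotation (Circle.exp (-(L₀ d).arg))), ?_⟩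
  rw [LinearIsometryEquiv.trans_apply, rotation_apply, Circle.coe_exp, ← L₀.norm_map d,
    Complex.ofReal_neg, neg_mul, Complex.exp_neg, inv_mul_eq_iff_eq_mul₀ (Complex.exp_ne_zero _),
    mul_comm, Complex.norm_mul_exp_arg_mul_I]

theorem LinearIsometryEquiv.integral_comp_norm_norm_sub {E F : Type*} [NormedAddCommGroup E]
    [InnerProductSpace ℝ E] [FiniteDimensional ℝ E] [MeasurableSpace E] [BorelSpace E]
    [NormedAddCommGroup F] [InnerProductSpace ℝ F] [FiniteDimensional ℝ F] [MeasurableSpace F]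
    [BorelSpace F] (L : E ≃ₗᵢ[ℝ] F) (g : ℝ → ℝ → ℝ) (d : E) :
    ∫ x, g ‖x‖ ‖x - d‖ = ∫ y, g ‖y‖ ‖y - L d‖ := by
  rw [← L.measurePreserving.integral_comp L.toHomeomorph.measurableEmbedding]
  simp only [← map_sub, LinearIsometryEquiv.norm_map]

theorem integral_complex_eq_integral_Ioi_mul_intervalIntegral {f : ℂ → ℝ} (hf : Continuous f)
    (hf_nonneg : 0 ≤ f) :
    ∫ z, f z = ∫ r in Ioi 0, r * ∫ θ in -π..π, f (Complex.polarCoord.symm (r, θ)) := by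
  have hcont : Continuous fun p : ℝ × ℝ => f (Complex.polarCoord.symm p) := by
    simp only [Complex.polarCoord_symm_apply]; fun_prop
  have hangular : ∀ r > 0, ENNReal.ofReal (r * ∫ θ in -π..π, f (Complex.polarCoord.symm (r, θ))) =
      ∫⁻ θ in Ioo (-π) π,
        ENNReal.ofReal r * ENNReal.ofReal (f (Complex.polarCoord.symm (r, θ))) := by
    intro r hr
    rw [intervalIntegral.integral_of_le (by linarith [pi_pos]), integral_Ioc_eq_integral_Ioo,
      ← integral_const_mul, ofReal_integral_eq_lintegral_ofReal]
    · simp_rw [ENNReal.ofReal_mul hr.le]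
    · exact (continuous_const.mul (hcont.comp (Continuous.prodMk_right r))).integrableOn_Icc
        |>.mono_set Ioo_subset_Icc_self
    · exact ae_of_all _ fun θ => mul_nonneg hr.le (hf_nonneg _)
  have hpolar : ∫⁻ z, ENNReal.ofReal (f z) = ∫⁻ r in Ioi 0, ∫⁻ θ in Ioo (-π) π,
      ENNReal.ofReal r * ENNReal.ofReal (f (Complex.polarCoord.symm (r, θ))) := by
    rw [← Complex.lintegral_comp_polarCoord_symm, polarCoord_target, Measure.volume_eq_prod,
      ← Measure.prod_restrict, lintegral_prod]
    · rfl
    · exact (ENNReal.measurable_ofReal.comp measurable_fst).aemeasurable.mul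
        (ENNReal.measurable_ofReal.comp hcont.measurable).aemeasurable
  have hradial : Continuous fun r : ℝ => r * ∫ θ in -π..π, f (Complex.polarCoord.symm (r, θ)) :=
    continuous_id.mul (intervalIntegral.continuous_parametric_intervalIntegral_of_continuous'
      hcont _ _)
  rw [integral_eq_lintegral_of_nonneg_ae (ae_of_all _ hf_nonneg) hf.aestronglyMeasurable, hpolar,
    integral_eq_lintegral_of_nonneg_ae _ hradial.aestronglyMeasurable,
    setLIntegral_congr_fun measurableSet_Ioi hangular]
  refine (ae_restrict_iff' measurableSet_Ioi).2 (ae_of_all _ fun r (hr : 0 < r) => ?_)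
  exact mul_nonneg hr.le (intervalIntegral.integral_nonneg (by linarith [pi_pos])
    fun θ _ => hf_nonneg _)

theorem norm_polarCoord_symm_sub_ofReal_sq (r θ D : ℝ) :
    ‖Complex.polarCoord.symm (r, θ) - D‖ ^ 2 = r ^ 2 + D ^ 2 - 2 * r * D * cos θ := by
  rw [Complex.sq_norm, Complex.normSq_apply, Complex.polarCoord_symm_apply]
  simp only [Complex.sub_re, Complex.sub_im, Complex.mul_re, Complex.mul_im, Complex.add_re,
    Complex.add_im, Complex.ofReal_re, Complex.ofReal_im, Complex.I_re, Complex.I_im]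
  nlinarith [sin_sq_add_cos_sq θ]

theorem intervalIntegral_exp_mul_cos_neg_pi_pi (a : ℝ) :
    ∫ θ in -π..π, exp (a * cos θ) = 2 * π * besselI0 a := by
  have hint : ∀ x y : ℝ, IntervalIntegrable (fun θ => exp (a * cos θ)) volume x y :=
    fun x y => by apply Continuous.intervalIntegrable; fun_prop
  have hsymm : ∫ θ in -π..0, exp (a * cos θ) = ∫ θ in 0..π, exp (a * cos θ) := by
    simpa using (intervalIntegral.integral_comp_neg (a := 0) (b := π)
      fun θ => exp (a * cos θ)).symm
  rw [← intervalIntegral.integral_add_adjacent_intervals (hint _ 0) (hint 0 _), hsymm, besselI0]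
  field_simp
  ring

theorem mul_intervalIntegral_gaussian_polarCoord {r : ℝ} (hr : 0 < r) (σ D : ℝ) :
    r * ∫ θ in -π..π, ‖Complex.polarCoord.symm (r, θ)‖ * (1 / (2 * π * σ ^ 2)) *
        exp (-‖Complex.polarCoord.symm (r, θ) - D‖ ^ 2 / (2 * σ ^ 2)) =
      r ^ 2 / σ ^ 2 * exp (-(r ^ 2 + D ^ 2) / (2 * σ ^ 2)) * besselI0 (D * r / σ ^ 2) := by
  have hsplit : ∀ θ, ‖Complex.polarCoord.symm (r, θ)‖ * (1 / (2 * π * σ ^ 2)) *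
      exp (-‖Complex.polarCoord.symm (r, θ) - D‖ ^ 2 / (2 * σ ^ 2)) =
      r / (2 * π * σ ^ 2) * exp (-(r ^ 2 + D ^ 2) / (2 * σ ^ 2)) *
        exp (D * r / σ ^ 2 * cos θ) := by
    intro θ
    rw [Complex.norm_polarCoord_symm, abs_of_pos hr, norm_polarCoord_symm_sub_ofReal_sq,
      mul_assoc (r / _), ← exp_add]
    ring_nf
  simp_rw [hsplit]
  rw [intervalIntegral.integral_const_mul, intervalIntegral_exp_mul_cos_neg_pi_pi]
  field_simp

theorem stmt_8_general (σ : ℝ) (d : EuclideanSpace ℝ (Fin 2)) (D : ℝ) (hD : D = ‖d‖) :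
    (∫ x : EuclideanSpace ℝ (Fin 2),
        ‖x - d‖ * (1 / (2 * π * σ ^ 2)) * exp (-‖x‖ ^ 2 / (2 * σ ^ 2))) =
    ∫ u in Set.Ioi (0 : ℝ),
        (u ^ 2 / σ ^ 2) * exp (-(u ^ 2 + D ^ 2) / (2 * σ ^ 2)) * besselI0 (D * u / σ ^ 2) := by
  obtain ⟨L, hL⟩ := exists_linearIsometryEquiv_complex_apply_eq_norm finrank_euclideanSpace_fin d
  calc _ = ∫ x : EuclideanSpace ℝ (Fin 2),
        ‖x‖ * (1 / (2 * π * σ ^ 2)) * exp (-‖x - d‖ ^ 2 / (2 * σ ^ 2)) := by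
        rw [← integral_sub_left_eq_self _ volume d]
        simp only [sub_sub_cancel_left, norm_neg, norm_sub_rev d]
    _ = ∫ z : ℂ, ‖z‖ * (1 / (2 * π * σ ^ 2)) * exp (-‖z - D‖ ^ 2 / (2 * σ ^ 2)) := by
        rw [hD, ← hL]
        exact L.integral_comp_norm_norm_sub (fun s t => s * (1 / (2 * π * σ ^ 2)) *
          exp (-t ^ 2 / (2 * σ ^ 2))) d
    _ = _ := by
        rw [integral_complex_eq_integral_Ioi_mul_intervalIntegral (by fun_prop)
          fun z => by positivity]
        exact setIntegral_congr_fun measurableSet_Ioi fun r hr =>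
          mul_intervalIntegral_gaussian_polarCoord hr σ D

theorem stmt_8 (σ : ℝ) (hσ : 0 < σ) (d : EuclideanSpace ℝ (Fin 2)) (D : ℝ) (hD : D = ‖d‖) :
    (∫ x : EuclideanSpace ℝ (Fin 2),
        ‖x - d‖ * (1 / (2 * π * σ ^ 2)) * exp (-‖x‖ ^ 2 / (2 * σ ^ 2))) =
    ∫ u in Set.Ioi (0 : ℝ),
        (u ^ 2 / σ ^ 2) * exp (-(u ^ 2 + D ^ 2) / (2 * σ ^ 2)) * besselI0 (D * u / σ ^ 2) :=
  stmt_8_general σ d D hD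
end

section
/- Let σ > 0 and d ∈ ℝ² with D = ‖d‖ and s = D/σ. Define I₀(z) = (1/π)·∫₀^π e^{z·cos t} dt and I₁(z) = (1/π)·∫₀^π e^{z·cos t}·cos t dt. Then ∫_{ℝ²} ‖x − d‖ · (1/(2πσ²)) · e^{−‖x‖²/(2σ²)} dx = σ·√(π/8)·e^{−s²/4}·[(s² + 2)·I₀(s²/4) + s²·I₁(s²/4)]. -/
/-!
Translating by `d` turns the integrand into `‖z‖ · exp (-b ‖z + d‖²)` with `b = 1 / (2σ²)`, and a
linear isometry onto `ℂ` sending `d` to the real number `D = ‖d‖` reduces everything to the plane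
`ℂ`. In polar coordinates the radial integrand is `r² exp (-b r² - 2bD cos θ · r)`. Pairing the
angle `θ` with `θ - π` flips the sign of `cos θ`, so the two radial integrals over `(0, ∞)` join
into one over `ℝ`: a Gaussian second moment, equal to
`√(π/b) (1/(2b) + D² cos² θ) exp (b D² cos² θ)`. Writing `cos² θ = (1 + cos 2θ) / 2` and
substituting `u = 2θ` turns the remaining angular integral over `(0, π)` into the integral
representations of `I₀` and `I₁` at `b D² / 2`.
-/

open MeasureTheory Real

/-- Modified Bessel function of the first kind of order 1 (integral representation). -/
noncomputable def besselI1 (z : ℝ) : ℝ := (1 / π) * ∫ t in (0:ℝ)..π, exp (z * cos t) * cos t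

open ProbabilityTheory Set Filter
open scoped NNReal

lemma integral_sq_gaussianReal (m : ℝ) (v : ℝ≥0) : ∫ x, x ^ 2 ∂gaussianReal m v = v + m ^ 2 := by
  have h := variance_eq_sub (memLp_id_gaussianReal (μ := m) (v := v) 2)
  simp only [variance_id_gaussianReal, Pi.pow_apply, id_eq, integral_id_gaussianReal] at h
  linarith

lemma integrable_sq_mul_gaussianPDFReal (m : ℝ) {v : ℝ≥0} (hv : v ≠ 0) :
    Integrable fun x => gaussianPDFReal m v x * x ^ 2 := by
  have h := (memLp_id_gaussianReal (μ := m) (v := v) 2).integrable_sq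
  rw [gaussianReal_of_var_ne_zero _ hv, integrable_withDensity_iff_integrable_smul'
    (measurable_gaussianPDF m v) (ae_of_all _ fun _ => gaussianPDF_lt_top)] at h
  simpa [toReal_gaussianPDF] using h

lemma sq_mul_exp_quadratic_eq_mul_gaussianPDFReal {b : ℝ} (hb : 0 < b) (c x : ℝ) :
    x ^ 2 * exp (-b * x ^ 2 + c * x) = exp (c ^ 2 / (4 * b)) * √(π / b) *
      (gaussianPDFReal (c / (2 * b)) (1 / (2 * b)).toNNReal x * x ^ 2) := by
  have hv : ((1 / (2 * b)).toNNReal : ℝ) = 1 / (2 * b) := Real.coe_toNNReal _ (by positivity)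
  rw [gaussianPDFReal, hv, show 2 * π * (1 / (2 * b)) = π / b by field_simp,
    show -b * x ^ 2 + c * x = c ^ 2 / (4 * b) + -(x - c / (2 * b)) ^ 2 / (2 * (1 / (2 * b))) by
      field_simp; ring, exp_add]
  field_simp

lemma integrable_sq_mul_exp_quadratic {b : ℝ} (hb : 0 < b) (c : ℝ) :
    Integrable fun x => x ^ 2 * exp (-b * x ^ 2 + c * x) := by
  simp_rw [sq_mul_exp_quadratic_eq_mul_gaussianPDFReal hb]
  exact (integrable_sq_mul_gaussianPDFReal _ (by simpa using hb)).const_mul _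

lemma integral_sq_mul_exp_quadratic {b : ℝ} (hb : 0 < b) (c : ℝ) :
    ∫ x, x ^ 2 * exp (-b * x ^ 2 + c * x)
      = √(π / b) * (1 / (2 * b) + c ^ 2 / (4 * b ^ 2)) * exp (c ^ 2 / (4 * b)) := by
  have hv : (1 / (2 * b)).toNNReal ≠ 0 := by simpa using hb
  simp_rw [sq_mul_exp_quadratic_eq_mul_gaussianPDFReal hb, integral_const_mul,
    ← smul_eq_mul (gaussianPDFReal _ _ _),
    ← integral_gaussianReal_eq_integral_smul hv, integral_sq_gaussianReal,
    Real.coe_toNNReal _ (by positivity : 0 ≤ 1 / (2 * b))]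
  field_simp
  ring

section

variable {E : Type*} [NormedAddCommGroup E] [NormedSpace ℝ E]

lemma integral_Ioi_add_integral_Ioi_comp_neg {f : ℝ → E} (hf : Integrable f) :
    (∫ x in Ioi (0 : ℝ), f x) + ∫ x in Ioi (0 : ℝ), f (-x) = ∫ x, f x := by
  rw [integral_comp_neg_Ioi, neg_zero]
  exact (add_comm _ _).trans (intervalIntegral.integral_Iic_add_Ioi hf.integrableOn hf.integrableOn)

lemma integral_Ioo_neg_pi_pi_eq_integral_add_comp_sub_pi {h : ℝ → E}
    (hh : IntegrableOn h (Ioo (-π) π)) :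
    ∫ θ in Ioo (-π) π, h θ = ∫ θ in 0..π, (h θ + h (θ - π)) := by
  have hπ : -π ≤ π := by linarith [pi_pos]
  have hh' : IntervalIntegrable h volume (-π) π :=
    (intervalIntegrable_iff_integrableOn_Ioo_of_le hπ).2 hh
  have h0 : (0 : ℝ) ∈ uIcc (-π) π := mem_uIcc_of_le (by linarith [pi_pos]) pi_pos.le
  have h_left := hh'.mono_set (uIcc_subset_uIcc left_mem_uIcc h0)
  have h_right := hh'.mono_set (uIcc_subset_uIcc h0 right_mem_uIcc)
  have h_shift : IntervalIntegrable (fun θ => h (θ - π)) volume 0 π := by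
    simpa using h_left.comp_sub_right π
  rw [intervalIntegral.integral_add h_right h_shift, intervalIntegral.integral_comp_sub_right,
    ← integral_Ioc_eq_integral_Ioo, ← intervalIntegral.integral_of_le hπ,
    zero_sub, sub_self, add_comm, intervalIntegral.integral_add_adjacent_intervals h_left h_right]

lemma integral_comp_cos_two_mul {f : ℝ → E} (hf : Continuous f) :
    ∫ θ in 0..π, f (cos (2 * θ)) = ∫ θ in 0..π, f (cos θ) := by
  have hg : Continuous fun θ => f (cos θ) := by fun_prop
  have h_reflect := intervalIntegral.integral_comp_sub_left (fun θ => f (cos θ)) (a := 0) (b := π)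
    (2 * π)
  simp only [cos_two_pi_sub, sub_zero, show 2 * π - π = π by ring] at h_reflect
  rw [intervalIntegral.integral_comp_mul_left (fun θ => f (cos θ)) two_ne_zero, mul_zero,
    ← intervalIntegral.integral_add_adjacent_intervals (hg.intervalIntegrable 0 π)
      (hg.intervalIntegrable π (2 * π)), ← h_reflect, ← two_smul ℝ, smul_smul]
  norm_num

end

lemma integral_exp_mul_cos_mul_add_mul_cos (z α β : ℝ) :
    ∫ θ in 0..π, exp (z * cos θ) * (α + β * cos θ) = π * (α * besselI0 z + β * besselI1 z) := by
  have h_split : (fun θ => exp (z * cos θ) * (α + β * cos θ))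
      = fun θ => α * exp (z * cos θ) + β * (exp (z * cos θ) * cos θ) := by
    ext θ; ring
  rw [h_split, intervalIntegral.integral_add (by apply Continuous.intervalIntegrable; fun_prop)
    (by apply Continuous.intervalIntegrable; fun_prop), intervalIntegral.integral_const_mul,
    intervalIntegral.integral_const_mul, besselI0, besselI1]
  field_simp

lemma integral_Ioi_sq_mul_exp_quadratic_add_neg {b : ℝ} (hb : 0 < b) (c : ℝ) :
    (∫ r in Ioi (0 : ℝ), r ^ 2 * exp (-b * r ^ 2 + c * r))
        + ∫ r in Ioi (0 : ℝ), r ^ 2 * exp (-b * r ^ 2 + -c * r)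
      = √(π / b) * (1 / (2 * b) + c ^ 2 / (4 * b ^ 2)) * exp (c ^ 2 / (4 * b)) := by
  rw [← integral_sq_mul_exp_quadratic hb c,
    ← integral_Ioi_add_integral_Ioi_comp_neg (integrable_sq_mul_exp_quadratic hb c)]
  simp only [neg_sq, mul_neg, neg_mul]

lemma integrable_sq_mul_exp_quadratic_cos {b : ℝ} (hb : 0 < b) (c : ℝ) :
    Integrable (fun p : ℝ × ℝ => p.1 ^ 2 * exp (-b * p.1 ^ 2 + c * cos p.2 * p.1))
      ((volume.restrict (Ioi 0)).prod (volume.restrict (Ioo (-π) π))) := by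
  have h_major : Integrable (fun p : ℝ × ℝ => p.1 ^ 2 * exp (-b * p.1 ^ 2 + |c| * p.1) * 1)
      ((volume.restrict (Ioi 0)).prod (volume.restrict (Ioo (-π) π))) :=
    (integrable_sq_mul_exp_quadratic hb |c|).restrict.mul_prod (integrable_const 1)
  refine h_major.mono' (by fun_prop) ?_
  rw [Measure.prod_restrict]
  filter_upwards [ae_restrict_mem (measurableSet_Ioi.prod measurableSet_Ioo)] with p hp
  have hr : 0 < p.1 := hp.1
  rw [mul_one, norm_of_nonneg (by positivity)]
  gcongr
  nlinarith [neg_abs_le c, le_abs_self c, abs_nonneg c, neg_one_le_cos p.2, cos_le_one p.2]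

lemma integral_norm_mul_exp_neg_mul_sq_norm_add_ofReal {b : ℝ} (hb : 0 < b) (D : ℝ) :
    ∫ z : ℂ, ‖z‖ * exp (-b * ‖z + D‖ ^ 2)
      = exp (-b * D ^ 2) * ∫ θ in Ioo (-π) π,
          ∫ r in Ioi (0 : ℝ), r ^ 2 * exp (-b * r ^ 2 + (-2 * b * D) * cos θ * r) := by
  have h_polar : ∀ p ∈ Ioi (0 : ℝ) ×ˢ Ioo (-π) π,
      p.1 • (‖Complex.polarCoord.symm p‖ * exp (-b * ‖Complex.polarCoord.symm p + D‖ ^ 2))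
        = exp (-b * D ^ 2) * (p.1 ^ 2 * exp (-b * p.1 ^ 2 + (-2 * b * D) * cos p.2 * p.1)) := by
    rintro ⟨r, θ⟩ ⟨hr, -⟩
    have hr : 0 < r := hr
    have h_sq : ‖Complex.polarCoord.symm (r, θ) + D‖ ^ 2 = r ^ 2 + 2 * D * cos θ * r + D ^ 2 := by
      have h_cart : Complex.polarCoord.symm (r, θ) + D
          = ↑(r * cos θ + D) + ↑(r * sin θ) * Complex.I := by
        simp only [Complex.polarCoord_symm_apply]; push_cast; ring
      rw [h_cart, Complex.sq_norm, Complex.normSq_add_mul_I]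
      linear_combination r ^ 2 * sin_sq_add_cos_sq θ
    rw [Complex.norm_polarCoord_symm, abs_of_pos hr, h_sq, smul_eq_mul, ← mul_assoc,
      mul_left_comm, ← exp_add]
    ring_nf
  rw [← Complex.integral_comp_polarCoord_symm, polarCoord_target,
    setIntegral_congr_fun (measurableSet_Ioi.prod measurableSet_Ioo) h_polar, integral_const_mul,
    Measure.volume_eq_prod, ← Measure.prod_restrict,
    integral_prod_symm _ (integrable_sq_mul_exp_quadratic_cos hb _)]

lemma integral_norm_sub_ofReal_mul_exp_neg_mul_sq_norm {b : ℝ} (hb : 0 < b) (D : ℝ) :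
    ∫ z : ℂ, ‖z - D‖ * exp (-b * ‖z‖ ^ 2)
      = π * √(π / b) * exp (-b * D ^ 2 / 2) * ((1 / (2 * b) + D ^ 2 / 2) * besselI0 (b * D ^ 2 / 2)
          + D ^ 2 / 2 * besselI1 (b * D ^ 2 / 2)) := by
  have h_translate : ∫ z : ℂ, ‖z - D‖ * exp (-b * ‖z‖ ^ 2)
      = ∫ z : ℂ, ‖z‖ * exp (-b * ‖z + D‖ ^ 2) := by
    rw [← integral_add_right_eq_self _ (D : ℂ)]
    simp only [add_sub_cancel_right]
  have h_radial : ∀ θ : ℝ,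
      (∫ r in Ioi (0 : ℝ), r ^ 2 * exp (-b * r ^ 2 + (-2 * b * D) * cos θ * r))
        + ∫ r in Ioi (0 : ℝ), r ^ 2 * exp (-b * r ^ 2 + (-2 * b * D) * cos (θ - π) * r)
      = exp (b * D ^ 2 / 2) * √(π / b) * (exp (b * D ^ 2 / 2 * cos (2 * θ))
          * ((1 / (2 * b) + D ^ 2 / 2) + D ^ 2 / 2 * cos (2 * θ))) := by
    intro θ
    rw [cos_sub_pi, mul_neg, integral_Ioi_sq_mul_exp_quadratic_add_neg hb, cos_two_mul,
      show (-2 * b * D * cos θ) ^ 2 / (4 * b) = b * D ^ 2 / 2 + b * D ^ 2 / 2 * (2 * cos θ ^ 2 - 1)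
        by field_simp; ring, exp_add]
    field_simp
    ring
  rw [h_translate, integral_norm_mul_exp_neg_mul_sq_norm_add_ofReal hb,
    integral_Ioo_neg_pi_pi_eq_integral_add_comp_sub_pi
      (integrable_sq_mul_exp_quadratic_cos hb _).integral_prod_right,
    intervalIntegral.integral_congr fun θ _ => h_radial θ, intervalIntegral.integral_const_mul,
    integral_comp_cos_two_mul (f := fun y => exp (b * D ^ 2 / 2 * y)
      * ((1 / (2 * b) + D ^ 2 / 2) + D ^ 2 / 2 * y)) (by fun_prop),
    integral_exp_mul_cos_mul_add_mul_cos, show -b * D ^ 2 / 2 = -b * D ^ 2 + b * D ^ 2 / 2 by ring,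
    exp_add]
  ring

lemma integral_comp_norm_sub_norm_eq_of_norm_eq {E F G : Type*}
    [NormedAddCommGroup E] [InnerProductSpace ℝ E] [FiniteDimensional ℝ E] [MeasurableSpace E]
    [BorelSpace E] [NormedAddCommGroup F] [InnerProductSpace ℝ F] [FiniteDimensional ℝ F]
    [MeasurableSpace F] [BorelSpace F] [NormedAddCommGroup G] [NormedSpace ℝ G]
    (T : F ≃ₗᵢ[ℝ] E) (g : ℝ → ℝ → G) {d : E} {d' : F} (h : ‖d'‖ = ‖d‖) :
    ∫ x, g ‖x - d‖ ‖x‖ = ∫ y, g ‖y - d'‖ ‖y‖ := by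
  let R := Submodule.reflection (ℝ ∙ (d' - T.symm d))ᗮ
  have hR : R d' = T.symm d := Submodule.reflection_sub (h.trans (T.symm.norm_map d).symm)
  let T' := R.trans T
  have hT' : T' d' = d := by simp [T', hR]
  rw [← T'.measurePreserving.integral_comp T'.toMeasurableEquiv.measurableEmbedding]
  congr with y
  rw [← hT', ← map_sub, T'.norm_map, T'.norm_map]

theorem integral_norm_sub_mul_exp_neg_mul_sq_norm {E : Type*} [NormedAddCommGroup E]
    [InnerProductSpace ℝ E] [FiniteDimensional ℝ E] [MeasurableSpace E] [BorelSpace E]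
    (hE : Module.finrank ℝ E = 2) {b : ℝ} (hb : 0 < b) (d : E) :
    ∫ x : E, ‖x - d‖ * exp (-b * ‖x‖ ^ 2)
      = π * √(π / b) * exp (-b * ‖d‖ ^ 2 / 2)
          * ((1 / (2 * b) + ‖d‖ ^ 2 / 2) * besselI0 (b * ‖d‖ ^ 2 / 2)
            + ‖d‖ ^ 2 / 2 * besselI1 (b * ‖d‖ ^ 2 / 2)) := by
  let T : ℂ ≃ₗᵢ[ℝ] E :=
    Complex.orthonormalBasisOneI.equiv (stdOrthonormalBasis ℝ E) (finCongr hE.symm)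
  rw [integral_comp_norm_sub_norm_eq_of_norm_eq T (fun a r => a * exp (-b * r ^ 2))
    (d' := (‖d‖ : ℂ)) (by simp)]
  exact integral_norm_sub_ofReal_mul_exp_neg_mul_sq_norm hb ‖d‖

theorem stmt_9 (σ : ℝ) (hσ : 0 < σ) (d : EuclideanSpace ℝ (Fin 2)) (D s : ℝ)
    (hD : D = ‖d‖) (hs : s = D / σ) :
    (∫ x : EuclideanSpace ℝ (Fin 2),
        ‖x - d‖ * (1 / (2 * π * σ ^ 2)) * exp (-‖x‖ ^ 2 / (2 * σ ^ 2))) =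
    σ * Real.sqrt (π / 8) * exp (-s ^ 2 / 4) *
      ((s ^ 2 + 2) * besselI0 (s ^ 2 / 4) + s ^ 2 * besselI1 (s ^ 2 / 4)) := by
  have hb : 0 < 1 / (2 * σ ^ 2) := by positivity
  have h_integrand : (fun x : EuclideanSpace ℝ (Fin 2) =>
        ‖x - d‖ * (1 / (2 * π * σ ^ 2)) * exp (-‖x‖ ^ 2 / (2 * σ ^ 2)))
      = fun x => 1 / (2 * π * σ ^ 2) * (‖x - d‖ * exp (-(1 / (2 * σ ^ 2)) * ‖x‖ ^ 2)) := by
    ext x; ring_nf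
  have h_sqrt : √(π / (1 / (2 * σ ^ 2))) = 4 * σ * √(π / 8) := by
    rw [show π / (1 / (2 * σ ^ 2)) = (4 * σ) ^ 2 * (π / 8) by field_simp; ring,
      sqrt_mul (sq_nonneg _), sqrt_sq (by positivity)]
  have hDs : D = s * σ := by rw [hs]; field_simp
  rw [h_integrand, integral_const_mul, integral_norm_sub_mul_exp_neg_mul_sq_norm
    finrank_euclideanSpace_fin hb, ← hD, h_sqrt, hDs]
  field_simp
  ring_nf
end

section
/- Let λ > 0, D > 0 and φ₀ ∈ (0, 2π]. Set s = (λ·φ₀·D²)^{−1/2}, and define erf(x) = (2/√π)·∫₀^x e^{−t²} dt and γ(s, φ₀) = √(π/2)·{1 + [8·(1 − cos(φ₀/4))/φ₀ − 2]·erf(1/(√2·s))}. Then ∫₀^∞ ∫_{−φ₀/2}^{φ₀/2} λ·ρ·e^{−λ·φ₀·ρ²/2} · √(ρ² + D² − 2ρD·cos φ) dφ dρ ≤ D·(1 + s·γ(s, φ₀)). -/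
open MeasureTheory Real

/-- The Gauss error function. -/
noncomputable def erf (x : ℝ) : ℝ := (2 / Real.sqrt π) * ∫ t in (0:ℝ)..x, exp (-t ^ 2)

/-- The function `γ(s, φ₀)` from the paper. -/
noncomputable def gammaFn (s φ₀ : ℝ) : ℝ :=
  Real.sqrt (π / 2) *
    (1 + (8 * (1 - cos (φ₀ / 4)) / φ₀ - 2) * erf (1 / (Real.sqrt 2 * s)))

/-!
For a relay at polar position `(ρ, φ)` the distance to the destination is at most
`|D - ρ| + 2 min ρ D |sin (φ / 2)|`, so integrating over the cone bounds the inner integral by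
`φ₀ (|D - ρ| + k min ρ D)` with `k = 8 (1 - cos (φ₀ / 4)) / φ₀`, and the radial weight becomes the
Rayleigh density `2 a² ρ exp (-(a ρ)²)` with `a² = λ φ₀ / 2`. The remaining radial integral is
computed exactly: on `[0, D]` and on `(D, ∞)` the integrand is a combination of the Rayleigh
density and of its first moment, whose primitives are `-exp (-(a ρ)²)` and
`√π / (2 a) · erf (a ρ) - ρ exp (-(a ρ)²)`. The result is exactly `D (1 + s γ(s, φ₀))`.
-/

open Set Filter Topology

theorem hasDerivAt_erf (x : ℝ) : HasDerivAt erf (2 / √π * exp (-x ^ 2)) x := by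
  have hc : Continuous fun t : ℝ => exp (-t ^ 2) := by fun_prop
  exact (intervalIntegral.integral_hasDerivAt_right (hc.intervalIntegrable _ _)
    hc.aestronglyMeasurable.stronglyMeasurableAtFilter hc.continuousAt).const_mul _

@[simp]
theorem erf_zero : erf 0 = 0 := by simp [erf]

theorem tendsto_erf_atTop : Tendsto erf atTop (𝓝 1) := by
  have hI : ∫ t in Ioi (0 : ℝ), exp (-t ^ 2) = √π / 2 := by
    simpa using integral_gaussian_Ioi 1
  have h := (intervalIntegral_tendsto_integral_Ioi 0
    (integrable_exp_neg_mul_sq one_pos).integrableOn tendsto_id).const_mul (2 / √π)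
  simp only [neg_mul, one_mul, hI, id] at h
  rwa [div_mul_div_cancel₀ (sqrt_pos.2 pi_pos).ne', div_self two_ne_zero] at h

theorem tendsto_pow_mul_exp_neg_sq_mul {a : ℝ} (ha : a ≠ 0) (n : ℕ) :
    Tendsto (fun x => x ^ n * exp (-(a * x) ^ 2)) atTop (𝓝 0) := by
  refine ((tendsto_rpow_abs_mul_exp_neg_mul_sq_cocompact (pow_pos (abs_pos.2 ha) 2) n).mono_left
    atTop_le_cocompact).congr' ?_
  filter_upwards [eventually_ge_atTop 0] with x hx
  rw [abs_of_nonneg hx, rpow_natCast, sq_abs, mul_pow, neg_mul]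

/-- Triangle inequality through the point at distance `min ρ D` on the ray of the farther point:
the chord it cuts off has length `2 min ρ D |sin (φ / 2)|`. -/
theorem sqrt_sq_add_sq_sub_mul_cos_le {ρ D : ℝ} (hρ : 0 ≤ ρ) (hD : 0 ≤ D) (φ : ℝ) :
    √(ρ ^ 2 + D ^ 2 - 2 * ρ * D * cos φ) ≤ |D - ρ| + 2 * min ρ D * |sin (φ / 2)| := by
  set m := min ρ D
  set M := max ρ D
  set t := |sin (φ / 2)|
  have hdiff : |D - ρ| = M - m := by rw [max_sub_min_eq_abs, abs_sub_comm]
  have hlaw : ρ ^ 2 + D ^ 2 - 2 * ρ * D * cos φ = (M - m) ^ 2 + 4 * m * M * t ^ 2 := by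
    have hcos : cos φ = 1 - 2 * t ^ 2 := by
      have h := cos_two_mul' (φ / 2)
      rw [mul_div_cancel₀ φ two_ne_zero] at h
      linarith [cos_sq_add_sin_sq (φ / 2), sq_abs (sin (φ / 2))]
    rw [← hdiff, sq_abs, hcos]
    linear_combination (-4 * t ^ 2) * min_mul_max ρ D
  have hm : 0 ≤ m := le_min hρ hD
  have hmM : 0 ≤ M - m := sub_nonneg.2 min_le_max
  have ht : 0 ≤ t := abs_nonneg _
  rw [hdiff, hlaw, sqrt_le_left (by positivity)]
  nlinarith [mul_nonneg (mul_nonneg (mul_nonneg hm ht) hmM) (sub_nonneg.2 (abs_sin_le_one (φ / 2)))]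

theorem integral_abs_sin_half {φ₀ : ℝ} (h0 : 0 ≤ φ₀) (h4π : φ₀ ≤ 4 * π) :
    ∫ φ in -(φ₀ / 2)..φ₀ / 2, |sin (φ / 2)| = 4 * (1 - cos (φ₀ / 4)) := by
  have hc : Continuous fun φ => |sin (φ / 2)| := by fun_prop
  have hright : ∫ φ in 0..φ₀ / 2, |sin (φ / 2)| = 2 * (1 - cos (φ₀ / 4)) := by
    have hsin : EqOn (fun φ => |sin (φ / 2)|) (fun φ => sin (φ / 2)) (uIcc 0 (φ₀ / 2)) := by
      intro φ hφ
      rw [uIcc_of_le (by linarith)] at hφ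
      exact abs_of_nonneg (sin_nonneg_of_nonneg_of_le_pi (by linarith [hφ.1]) (by linarith [hφ.2]))
    rw [intervalIntegral.integral_congr hsin,
      intervalIntegral.integral_comp_div (fun x => sin x) two_ne_zero, integral_sin, zero_div,
      cos_zero, div_div, smul_eq_mul]
    norm_num
  have hleft : ∫ φ in -(φ₀ / 2)..0, |sin (φ / 2)| = ∫ φ in 0..φ₀ / 2, |sin (φ / 2)| := by
    simpa [neg_div] using (intervalIntegral.integral_comp_neg (a := 0) (b := φ₀ / 2)
      (fun φ => |sin (φ / 2)|)).symm
  rw [← intervalIntegral.integral_add_adjacent_intervals (b := 0) (hc.intervalIntegrable _ _)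
    (hc.intervalIntegrable _ _), hleft, hright]
  ring

theorem integral_sqrt_sq_add_sq_sub_mul_cos_le {ρ D φ₀ : ℝ} (hρ : 0 ≤ ρ) (hD : 0 ≤ D)
    (h0 : 0 ≤ φ₀) (h4π : φ₀ ≤ 4 * π) :
    ∫ φ in -(φ₀ / 2)..φ₀ / 2, √(ρ ^ 2 + D ^ 2 - 2 * ρ * D * cos φ) ≤
      φ₀ * |D - ρ| + 8 * min ρ D * (1 - cos (φ₀ / 4)) := by
  have hdist : Continuous fun φ => √(ρ ^ 2 + D ^ 2 - 2 * ρ * D * cos φ) := by fun_prop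
  have hbound : Continuous fun φ => |D - ρ| + 2 * min ρ D * |sin (φ / 2)| := by fun_prop
  calc ∫ φ in -(φ₀ / 2)..φ₀ / 2, √(ρ ^ 2 + D ^ 2 - 2 * ρ * D * cos φ)
      ≤ ∫ φ in -(φ₀ / 2)..φ₀ / 2, (|D - ρ| + 2 * min ρ D * |sin (φ / 2)|) :=
        intervalIntegral.integral_mono_on (by linarith) (hdist.intervalIntegrable _ _)
          (hbound.intervalIntegrable _ _) fun φ _ => sqrt_sq_add_sq_sub_mul_cos_le hρ hD φ
    _ = φ₀ * |D - ρ| + 8 * min ρ D * (1 - cos (φ₀ / 4)) := by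
        rw [intervalIntegral.integral_add intervalIntegrable_const
          ((by fun_prop : Continuous fun φ => 2 * min ρ D * |sin (φ / 2)|).intervalIntegrable _ _),
          intervalIntegral.integral_const, intervalIntegral.integral_const_mul,
          integral_abs_sin_half h0 h4π, smul_eq_mul]
        ring

/-- The Rayleigh density with scale parameter `σ = 1 / (a √2)`. -/
noncomputable def rayleighPDF (a ρ : ℝ) : ℝ := 2 * a ^ 2 * ρ * exp (-(a * ρ) ^ 2)

section Rayleigh

variable {a : ℝ}

theorem continuous_rayleighPDF (a : ℝ) : Continuous (rayleighPDF a) := by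
  unfold rayleighPDF; fun_prop

theorem rayleighPDF_nonneg {ρ : ℝ} (hρ : 0 ≤ ρ) : 0 ≤ rayleighPDF a ρ := by
  unfold rayleighPDF; positivity

theorem hasDerivAt_neg_exp_neg_sq_mul (a x : ℝ) :
    HasDerivAt (fun ρ => -exp (-(a * ρ) ^ 2)) (rayleighPDF a x) x := by
  refine ((((hasDerivAt_id x).const_mul a).pow 2).neg.exp.neg).congr_deriv ?_
  simp only [rayleighPDF, id, Pi.neg_apply, Pi.pow_apply]; ring

theorem hasDerivAt_erf_sub_mul_exp_neg_sq_mul (ha : a ≠ 0) (x : ℝ) :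
    HasDerivAt (fun ρ => √π / (2 * a) * erf (a * ρ) - ρ * exp (-(a * ρ) ^ 2))
      (x * rayleighPDF a x) x := by
  have herf := ((hasDerivAt_erf (a * x)).comp x ((hasDerivAt_id x).const_mul a)).const_mul
    (√π / (2 * a))
  refine (herf.add ((hasDerivAt_id x).mul (hasDerivAt_neg_exp_neg_sq_mul a x))).congr_deriv ?_
    |>.congr_of_eventuallyEq (.of_forall fun ρ => ?_)
  · simp only [rayleighPDF, id]; field_simp; ring
  · simp only [Function.comp, id, Pi.add_apply, Pi.mul_apply]; ring

theorem integral_rayleighPDF (a b c : ℝ) :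
    ∫ ρ in b..c, rayleighPDF a ρ = exp (-(a * b) ^ 2) - exp (-(a * c) ^ 2) := by
  rw [intervalIntegral.integral_eq_sub_of_hasDerivAt (fun x _ => hasDerivAt_neg_exp_neg_sq_mul a x)
    ((continuous_rayleighPDF a).intervalIntegrable b c)]
  ring

theorem integral_mul_rayleighPDF (ha : a ≠ 0) (c : ℝ) :
    ∫ ρ in 0..c, ρ * rayleighPDF a ρ = √π / (2 * a) * erf (a * c) - c * exp (-(a * c) ^ 2) := by
  rw [intervalIntegral.integral_eq_sub_of_hasDerivAt
    (fun x _ => hasDerivAt_erf_sub_mul_exp_neg_sq_mul ha x)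
    ((continuous_id.mul (continuous_rayleighPDF a)).intervalIntegrable 0 c)]
  simp

theorem tendsto_neg_exp_neg_sq_mul (ha : a ≠ 0) :
    Tendsto (fun ρ => -exp (-(a * ρ) ^ 2)) atTop (𝓝 0) := by
  simpa using (tendsto_pow_mul_exp_neg_sq_mul ha 0).neg

theorem tendsto_erf_sub_mul_exp_neg_sq_mul (ha : 0 < a) :
    Tendsto (fun ρ => √π / (2 * a) * erf (a * ρ) - ρ * exp (-(a * ρ) ^ 2)) atTop
      (𝓝 (√π / (2 * a))) := by
  simpa using ((tendsto_erf_atTop.comp (tendsto_id.const_mul_atTop ha)).const_mul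
    (√π / (2 * a))).sub (tendsto_pow_mul_exp_neg_sq_mul ha.ne' 1)

theorem integrableOn_Ioi_rayleighPDF (ha : a ≠ 0) {c : ℝ} (hc : 0 ≤ c) :
    IntegrableOn (rayleighPDF a) (Ioi c) :=
  integrableOn_Ioi_deriv_of_nonneg' (fun x _ => hasDerivAt_neg_exp_neg_sq_mul a x)
    (fun _ hx => rayleighPDF_nonneg (hc.trans (le_of_lt hx))) (tendsto_neg_exp_neg_sq_mul ha)

theorem integral_Ioi_rayleighPDF (ha : a ≠ 0) {c : ℝ} (hc : 0 ≤ c) :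
    ∫ ρ in Ioi c, rayleighPDF a ρ = exp (-(a * c) ^ 2) := by
  rw [integral_Ioi_of_hasDerivAt_of_nonneg' (fun x _ => hasDerivAt_neg_exp_neg_sq_mul a x)
    (fun _ hx => rayleighPDF_nonneg (hc.trans (le_of_lt hx))) (tendsto_neg_exp_neg_sq_mul ha)]
  ring

theorem integrableOn_Ioi_mul_rayleighPDF (ha : 0 < a) {c : ℝ} (hc : 0 ≤ c) :
    IntegrableOn (fun ρ => ρ * rayleighPDF a ρ) (Ioi c) :=
  integrableOn_Ioi_deriv_of_nonneg' (fun x _ => hasDerivAt_erf_sub_mul_exp_neg_sq_mul ha.ne' x)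
    (fun _ hx => mul_nonneg (hc.trans (le_of_lt hx)) (rayleighPDF_nonneg (hc.trans (le_of_lt hx))))
    (tendsto_erf_sub_mul_exp_neg_sq_mul ha)

theorem integral_Ioi_mul_rayleighPDF (ha : 0 < a) {c : ℝ} (hc : 0 ≤ c) :
    ∫ ρ in Ioi c, ρ * rayleighPDF a ρ =
      √π / (2 * a) * (1 - erf (a * c)) + c * exp (-(a * c) ^ 2) := by
  rw [integral_Ioi_of_hasDerivAt_of_nonneg'
    (fun x _ => hasDerivAt_erf_sub_mul_exp_neg_sq_mul ha.ne' x)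
    (fun _ hx => mul_nonneg (hc.trans (le_of_lt hx)) (rayleighPDF_nonneg (hc.trans (le_of_lt hx))))
    (tendsto_erf_sub_mul_exp_neg_sq_mul ha)]
  ring

end Rayleigh

section Radial

variable {a D : ℝ}

theorem rayleighPDF_mul_abs_sub_add_min_of_le {ρ : ℝ} (k : ℝ) (h : ρ ≤ D) :
    rayleighPDF a ρ * (|D - ρ| + k * min ρ D) =
      D * rayleighPDF a ρ + (k - 1) * (ρ * rayleighPDF a ρ) := by
  rw [abs_of_nonneg (sub_nonneg.2 h), min_eq_left h]; ring

theorem rayleighPDF_mul_abs_sub_add_min_of_ge {ρ : ℝ} (k : ℝ) (h : D ≤ ρ) :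
    rayleighPDF a ρ * (|D - ρ| + k * min ρ D) =
      ρ * rayleighPDF a ρ + (k - 1) * D * rayleighPDF a ρ := by
  rw [abs_of_nonpos (sub_nonpos.2 h), min_eq_right h]; ring

theorem continuous_rayleighPDF_mul_abs_sub_add_min (a D k : ℝ) :
    Continuous fun ρ => rayleighPDF a ρ * (|D - ρ| + k * min ρ D) := by
  have := continuous_rayleighPDF a
  fun_prop

theorem integrableOn_Ioi_rayleighPDF_mul_abs_sub_add_min (ha : 0 < a) (hD : 0 ≤ D) (k : ℝ) :
    IntegrableOn (fun ρ => rayleighPDF a ρ * (|D - ρ| + k * min ρ D)) (Ioi 0) := by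
  rw [← Ioc_union_Ioi_eq_Ioi hD]
  refine (continuous_rayleighPDF_mul_abs_sub_add_min a D k).integrableOn_Ioc.union ?_
  refine ((integrableOn_Ioi_mul_rayleighPDF ha hD).add
    ((integrableOn_Ioi_rayleighPDF ha.ne' hD).const_mul ((k - 1) * D))).congr_fun
    (fun ρ hρ => (rayleighPDF_mul_abs_sub_add_min_of_ge k (le_of_lt hρ)).symm) measurableSet_Ioi

theorem integral_Ioi_rayleighPDF_mul_abs_sub_add_min (ha : 0 < a) (hD : 0 ≤ D) (k : ℝ) :
    ∫ ρ in Ioi 0, rayleighPDF a ρ * (|D - ρ| + k * min ρ D) =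
      D + √π / (2 * a) * (1 + (k - 2) * erf (a * D)) := by
  have hint : IntervalIntegrable (rayleighPDF a) volume 0 D :=
    (continuous_rayleighPDF a).intervalIntegrable 0 D
  have hint' : IntervalIntegrable (fun ρ => ρ * rayleighPDF a ρ) volume 0 D :=
    (continuous_id.mul (continuous_rayleighPDF a)).intervalIntegrable 0 D
  have hnear : ∫ ρ in 0..D, rayleighPDF a ρ * (|D - ρ| + k * min ρ D) =
      D * (∫ ρ in 0..D, rayleighPDF a ρ) + (k - 1) * ∫ ρ in 0..D, ρ * rayleighPDF a ρ := by
    rw [intervalIntegral.integral_congr fun ρ hρ => rayleighPDF_mul_abs_sub_add_min_of_le k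
        (uIcc_of_le hD ▸ hρ).2,
      intervalIntegral.integral_add (hint.const_mul D) (hint'.const_mul _),
      intervalIntegral.integral_const_mul, intervalIntegral.integral_const_mul]
  have hfar : ∫ ρ in Ioi D, rayleighPDF a ρ * (|D - ρ| + k * min ρ D) =
      (∫ ρ in Ioi D, ρ * rayleighPDF a ρ) + (k - 1) * D * ∫ ρ in Ioi D, rayleighPDF a ρ := by
    rw [setIntegral_congr_fun measurableSet_Ioi fun ρ hρ =>
        rayleighPDF_mul_abs_sub_add_min_of_ge k (le_of_lt hρ),
      integral_add (integrableOn_Ioi_mul_rayleighPDF ha hD)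
        ((integrableOn_Ioi_rayleighPDF ha.ne' hD).const_mul _), integral_const_mul]
  rw [← intervalIntegral.integral_interval_add_Ioi'
      ((continuous_rayleighPDF_mul_abs_sub_add_min a D k).intervalIntegrable 0 D)
      ((integrableOn_Ioi_rayleighPDF_mul_abs_sub_add_min ha hD k).mono_set (Ioi_subset_Ioi hD)),
    hnear, hfar, integral_rayleighPDF, integral_mul_rayleighPDF ha.ne',
    integral_Ioi_rayleighPDF ha.ne' hD, integral_Ioi_mul_rayleighPDF ha hD]
  simp only [mul_zero, neg_zero, zero_pow two_ne_zero, exp_zero]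
  ring

end Radial

theorem mul_one_add_mul_gammaFn {a D : ℝ} (ha : 0 < a) (hD : 0 < D) (φ₀ : ℝ) :
    D * (1 + (2 * a ^ 2 * D ^ 2) ^ (-(1 : ℝ) / 2) *
        gammaFn ((2 * a ^ 2 * D ^ 2) ^ (-(1 : ℝ) / 2)) φ₀) =
      D + √π / (2 * a) * (1 + (8 * (1 - cos (φ₀ / 4)) / φ₀ - 2) * erf (a * D)) := by
  have hs : (2 * a ^ 2 * D ^ 2) ^ (-(1 : ℝ) / 2) = 1 / (√2 * (a * D)) := by
    rw [show 2 * a ^ 2 * D ^ 2 = (√2 * (a * D)) ^ 2 by rw [mul_pow, sq_sqrt two_pos.le]; ring,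
      neg_div, rpow_neg (sq_nonneg _), ← sqrt_eq_rpow, sqrt_sq (by positivity), one_div]
  have herf : 1 / (√2 * (1 / (√2 * (a * D)))) = a * D := by field_simp
  rw [hs, gammaFn, herf, sqrt_div' π two_pos.le]
  field_simp
  rw [sq_sqrt two_pos.le]
  ring

theorem stmt_10 (l D φ₀ s : ℝ) (hl : 0 < l) (hD : 0 < D) (hφ : 0 < φ₀)
    (hφ2 : φ₀ ≤ 2 * π) (hs : s = (l * φ₀ * D ^ 2) ^ (-(1:ℝ) / 2)) :
    (∫ ρ in Set.Ioi (0 : ℝ), ∫ φ in (-(φ₀ / 2))..(φ₀ / 2),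
        l * ρ * exp (-(l * φ₀ * ρ ^ 2) / 2) *
          Real.sqrt (ρ ^ 2 + D ^ 2 - 2 * ρ * D * cos φ)) ≤
      D * (1 + s * gammaFn s φ₀) := by
  set a := √(l * φ₀ / 2)
  have ha : 0 < a := sqrt_pos.2 (by positivity)
  have hμ : l * φ₀ = 2 * a ^ 2 := by rw [sq_sqrt (by positivity)]; ring
  set k := 8 * (1 - cos (φ₀ / 4)) / φ₀
  have hinner : ∀ ρ ∈ Ioi (0 : ℝ), ∫ φ in (-(φ₀ / 2))..(φ₀ / 2),
      l * ρ * exp (-(l * φ₀ * ρ ^ 2) / 2) * √(ρ ^ 2 + D ^ 2 - 2 * ρ * D * cos φ) ≤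
        rayleighPDF a ρ * (|D - ρ| + k * min ρ D) := by
    intro ρ (hρ : 0 < ρ)
    rw [intervalIntegral.integral_const_mul]
    calc _ ≤ l * ρ * exp (-(l * φ₀ * ρ ^ 2) / 2) *
          (φ₀ * |D - ρ| + 8 * min ρ D * (1 - cos (φ₀ / 4))) :=
          mul_le_mul_of_nonneg_left (integral_sqrt_sq_add_sq_sub_mul_cos_le hρ.le hD.le
            hφ.le (by linarith [pi_pos])) (by positivity)
      _ = _ := by
          rw [show -(l * φ₀ * ρ ^ 2) / 2 = -(a * ρ) ^ 2 by rw [hμ]; ring, rayleighPDF, ← hμ]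
          simp only [k]
          field_simp
  have hnonneg : ∀ ρ ∈ Ioi (0 : ℝ), 0 ≤ ∫ φ in (-(φ₀ / 2))..(φ₀ / 2),
      l * ρ * exp (-(l * φ₀ * ρ ^ 2) / 2) * √(ρ ^ 2 + D ^ 2 - 2 * ρ * D * cos φ) :=
    fun ρ (hρ : 0 < ρ) => intervalIntegral.integral_nonneg (by linarith) fun φ _ => by positivity
  calc _ ≤ ∫ ρ in Ioi 0, rayleighPDF a ρ * (|D - ρ| + k * min ρ D) :=
        integral_mono_of_nonneg (ae_restrict_of_forall_mem measurableSet_Ioi hnonneg)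
          (integrableOn_Ioi_rayleighPDF_mul_abs_sub_add_min ha hD.le k)
          (ae_restrict_of_forall_mem measurableSet_Ioi hinner)
    _ = D + √π / (2 * a) * (1 + (k - 2) * erf (a * D)) :=
        integral_Ioi_rayleighPDF_mul_abs_sub_add_min ha hD.le k
    _ = _ := by rw [hs, hμ, mul_one_add_mul_gammaFn ha hD]
end

section
/- Let α > 2 be a real number and let ν₀ satisfy 0 < ν₀ ≤ (3 − √5)/2. Then for every ν in the closed interval [ν₀, (1 + 2/α)·ν₀], the quadratic ν² − (ν₀ + 4)·ν + 2·(1 + ν₀) is strictly positive. -/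
/-!
Writing `q(ν) = ν² - (ν₀ + 4)ν + 2(1 + ν₀)`, one has
`q(ν) = (2ν₀ - ν)(4 - ν - ν₀) + 2(ν₀² - 3ν₀ + 1)`.
Since `α > 2` the interval lies below `2ν₀`, and `ν₀ < 1` keeps `ν + ν₀` below `4`, so the
product is positive; the last term is nonnegative because `(3 - √5)/2` is the smaller root
of `x² - 3x + 1`.
-/

open Real

lemma sq_sub_three_mul_add_one_nonneg {x : ℝ} (hx : x ≤ (3 - √5) / 2) :
    0 ≤ x ^ 2 - 3 * x + 1 := by
  have h5 : √5 ^ 2 = 5 := sq_sqrt (by norm_num)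
  have hfactor : x ^ 2 - 3 * x + 1 = ((3 - √5) / 2 - x) * ((3 + √5) / 2 - x) := by
    linear_combination (1 / 4 : ℝ) * h5
  rw [hfactor]
  exact mul_nonneg (by linarith) (by linarith [sqrt_nonneg 5])

lemma three_sub_sqrt_five_div_two_lt_one : (3 - √5) / 2 < 1 := by
  have : (1 : ℝ) < √5 := by
    rw [show (1 : ℝ) = √1 by simp]
    exact sqrt_lt_sqrt zero_le_one (by norm_num)
  linarith

lemma one_add_two_div_mul_lt_two_mul {α x : ℝ} (hα : 2 < α) (hx : 0 < x) :
    (1 + 2 / α) * x < 2 * x := by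
  have : 2 / α < 1 := (div_lt_one (by linarith)).2 hα
  nlinarith

theorem stmt_11 (α ν₀ : ℝ) (hα : 2 < α) (h0 : 0 < ν₀)
    (h1 : ν₀ ≤ (3 - Real.sqrt 5) / 2)
    (ν : ℝ) (hν : ν ∈ Set.Icc ν₀ ((1 + 2 / α) * ν₀)) :
    0 < ν ^ 2 - (ν₀ + 4) * ν + 2 * (1 + ν₀) := by
  have hν_lt : ν < 2 * ν₀ := hν.2.trans_lt (one_add_two_div_mul_lt_two_mul hα h0)
  have hν₀_lt : ν₀ < 1 := h1.trans_lt three_sub_sqrt_five_div_two_lt_one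
  have hprod : 0 < (2 * ν₀ - ν) * (4 - ν - ν₀) := mul_pos (by linarith) (by linarith)
  have hq : 0 ≤ ν₀ ^ 2 - 3 * ν₀ + 1 := sq_sub_three_mul_add_one_nonneg h1
  calc 0 < (2 * ν₀ - ν) * (4 - ν - ν₀) + 2 * (ν₀ ^ 2 - 3 * ν₀ + 1) := by linarith
    _ = ν ^ 2 - (ν₀ + 4) * ν + 2 * (1 + ν₀) := by ring
end

section
/- Let α ≥ 2 be a real number, let ν₀ satisfy 0 ≤ ν₀ ≤ (3 − √5)/2, and set ν₁ = (1 + 2/α)·ν₀. Then e^{−ν₀} − e^{−ν₁}·(1 + ν₁) ≤ ν₀·e^{−ν₁}·((4/α²)·ν₀ − 1). -/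
open Real

lemma exp_le_one_add_add_sq {x : ℝ} (hx : |x| ≤ 1) : exp x ≤ 1 + x + x ^ 2 := by
  linarith [abs_exp_sub_one_sub_id_le hx, le_abs_self (exp x - 1 - x)]

/-- Writing `exp (-a) = exp (-(a + x)) * exp x` and expanding `exp x` to second order. -/
lemma exp_neg_sub_exp_neg_add_mul_le (a : ℝ) {x : ℝ} (hx : |x| ≤ 1) :
    exp (-a) - exp (-(a + x)) * (1 + (a + x)) ≤ exp (-(a + x)) * (x ^ 2 - a) := by
  have hsplit : exp (-a) = exp (-(a + x)) * exp x := by rw [← exp_add]; ring_nf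
  calc exp (-a) - exp (-(a + x)) * (1 + (a + x))
      ≤ exp (-(a + x)) * (1 + x + x ^ 2) - exp (-(a + x)) * (1 + (a + x)) := by
        rw [hsplit]; gcongr; exact exp_le_one_add_add_sq hx
    _ = exp (-(a + x)) * (x ^ 2 - a) := by ring

theorem stmt_12 (α ν₀ ν₁ : ℝ) (hα : 2 ≤ α) (h0 : 0 ≤ ν₀)
    (h1 : ν₀ ≤ (3 - Real.sqrt 5) / 2) (hν₁ : ν₁ = (1 + 2 / α) * ν₀) :
    exp (-ν₀) - exp (-ν₁) * (1 + ν₁) ≤ ν₀ * exp (-ν₁) * ((4 / α ^ 2) * ν₀ - 1) := by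
  have hα0 : 0 < α := by linarith
  have hν₀_le_one : ν₀ ≤ 1 := by linarith [one_le_sqrt.2 (by norm_num : (1 : ℝ) ≤ 5)]
  have hx : |2 / α * ν₀| ≤ 1 := by
    have : 2 / α ≤ 1 := (div_le_one hα0).2 hα
    rw [abs_of_nonneg (by positivity)]
    nlinarith
  have hν₁_eq : ν₁ = ν₀ + 2 / α * ν₀ := by rw [hν₁]; ring
  rw [hν₁_eq]
  exact (exp_neg_sub_exp_neg_add_mul_le ν₀ hx).trans_eq (by ring)
end

section
/- Fix real parameters α > 2, D > 0, φ₀ ∈ (0, 2π], and ν₀ with 0 < ν₀ ≤ (3 − √5)/2. For σ > 0 define λ(σ) = 1/(2πσ²), A(σ) = φ₀·λ(σ)·D², E(σ) = ∫₀^∞ ∫_{−φ₀/2}^{φ₀/2} λ(σ)·ρ·e^{−λ(σ)·φ₀·ρ²/2}·√(ρ² + D² − 2ρD·cos φ) dφ dρ, and for p ∈ [0,1] set ν(p) = ν₀·(1 + 2p/α) and F(σ, p) = (1 − p)·(1 − e^{−ν(p)}) + p·[ 2 − A(σ)/(A(σ) + 2ν(p)) − e^{−ν(p)}·(1 + ν(p)·(1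 + ((2 − α)/(α·D))·E(σ))) ]. Then there exists σ_c > 0 such that for every σ ∈ (0, σ_c], the function p ↦ F(σ, p) is concave on [0, 1]. -/
/-!
With `b = 2/α`, `k = ν₀ b` and `w(σ) = 1 + (2-α)/(αD)·E(σ)`, the second derivative of
`p ↦ F(σ, p)` is `k e^{-ν}(2(ν-1)w + k(p(2-ν)w - 1)) + 4kA/(A+2ν)² - 8pk²A/(A+2ν)³`, where
`ν = ν₀ + kp`. At `w = b` the bracket is at most `b(5ν₀ - 2) < 0`, and the rational terms are
`O(1/A)`. As `σ → 0`, `A(σ) → ∞`, and `w(σ) → b` because `E(σ) → D`: by the triangle inequality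
`|E(σ) - D|` is at most the mean source–relay distance, which is `O(σ)`. Hence the second
derivative is negative on `[0, 1]` for all small `σ`.
-/

open MeasureTheory Real Filter Topology Set

lemma integral_Ioi_mul_exp_neg_mul_sq {b : ℝ} (hb : 0 < b) :
    ∫ r in Ioi (0 : ℝ), r * exp (-b * r ^ 2) = (2 * b)⁻¹ := by
  have h := integral_mul_cexp_neg_mul_sq (b := (b : ℂ)) (by simpa using hb)
  have hc : ∀ r : ℝ,
      (r : ℂ) * Complex.exp (-b * (r : ℂ) ^ 2) = ((r * exp (-b * r ^ 2) : ℝ) : ℂ) := by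
    intro r; push_cast; rfl
  simp_rw [hc, integral_complex_ofReal] at h
  exact_mod_cast h

lemma le_exp_sq_div_two (t : ℝ) : t ≤ exp (t ^ 2 / 2) := by
  nlinarith [add_one_le_exp (t ^ 2 / 2), sq_nonneg (t - 1)]

lemma sq_mul_exp_neg_mul_sq_le {a ρ : ℝ} (ha : 0 < a) (hρ : 0 ≤ ρ) :
    ρ ^ 2 * exp (-a * ρ ^ 2) ≤ (√a)⁻¹ * (ρ * exp (-(a / 2) * ρ ^ 2)) := by
  have hsa : 0 < √a := sqrt_pos.2 ha
  have key : √a * ρ ≤ exp (a / 2 * ρ ^ 2) := by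
    simpa [mul_pow, sq_sqrt ha.le, mul_div_right_comm] using le_exp_sq_div_two (√a * ρ)
  have hsplit : exp (-(a / 2) * ρ ^ 2) = exp (a / 2 * ρ ^ 2) * exp (-a * ρ ^ 2) := by
    rw [← exp_add]; ring_nf
  rw [hsplit, le_inv_mul_iff₀ hsa]
  calc √a * (ρ ^ 2 * exp (-a * ρ ^ 2)) = (√a * ρ) * (ρ * exp (-a * ρ ^ 2)) := by ring
    _ ≤ exp (a / 2 * ρ ^ 2) * (ρ * exp (-a * ρ ^ 2)) := by gcongr
    _ = _ := by ring

lemma abs_sqrt_law_of_cosines_sub_le {ρ D : ℝ} (hρ : 0 ≤ ρ) (hD : 0 ≤ D) (φ : ℝ) :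
    |√(ρ ^ 2 + D ^ 2 - 2 * ρ * D * cos φ) - D| ≤ ρ := by
  have hρD : 0 ≤ ρ * D := mul_nonneg hρ hD
  rw [abs_sub_le_iff]
  constructor
  · rw [sub_le_iff_le_add, sqrt_le_left (by positivity)]
    nlinarith [neg_one_le_cos φ]
  · rw [sub_le_comm]
    calc D - ρ ≤ |D - ρ| := le_abs_self _
      _ = √((D - ρ) ^ 2) := (sqrt_sq_eq_abs _).symm
      _ ≤ √(ρ ^ 2 + D ^ 2 - 2 * ρ * D * cos φ) := sqrt_le_sqrt (by nlinarith [cos_le_one φ])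

lemma abs_integral_sqrt_law_of_cosines_sub_le {ρ D φ₀ : ℝ} (hρ : 0 ≤ ρ) (hD : 0 ≤ D)
    (hφ : 0 ≤ φ₀) :
    |(∫ φ in (-(φ₀ / 2))..(φ₀ / 2), √(ρ ^ 2 + D ^ 2 - 2 * ρ * D * cos φ)) - φ₀ * D| ≤ φ₀ * ρ := by
  have hint : IntervalIntegrable (fun φ => √(ρ ^ 2 + D ^ 2 - 2 * ρ * D * cos φ)) volume
      (-(φ₀ / 2)) (φ₀ / 2) := by
    apply Continuous.intervalIntegrable; fun_prop
  have hconst : φ₀ * D = ∫ _ in (-(φ₀ / 2))..(φ₀ / 2), D := by simp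
  rw [hconst, ← intervalIntegral.integral_sub hint intervalIntegrable_const, ← norm_eq_abs]
  calc _ ≤ ρ * |φ₀ / 2 - -(φ₀ / 2)| := intervalIntegral.norm_integral_le_of_norm_le_const
        fun φ _ => abs_sqrt_law_of_cosines_sub_le hρ hD φ
    _ = φ₀ * ρ := by rw [abs_of_nonneg (by linarith)]; ring

noncomputable def meanRelayDistance (φ₀ D lam : ℝ) : ℝ :=
  ∫ ρ in Ioi (0 : ℝ), ∫ φ in (-(φ₀ / 2))..(φ₀ / 2),
    lam * ρ * exp (-(lam * φ₀ * ρ ^ 2) / 2) * √(ρ ^ 2 + D ^ 2 - 2 * ρ * D * cos φ)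

lemma abs_meanRelayDistance_sub_le {φ₀ D lam : ℝ} (hφ : 0 < φ₀) (hD : 0 ≤ D) (hlam : 0 < lam) :
    |meanRelayDistance φ₀ D lam - D| ≤ 2 / √(lam * φ₀ / 2) := by
  set a := lam * φ₀ / 2 with ha_def
  have ha : 0 < a := by positivity
  set S : ℝ → ℝ := fun ρ => ∫ φ in (-(φ₀ / 2))..(φ₀ / 2), √(ρ ^ 2 + D ^ 2 - 2 * ρ * D * cos φ)
  have hradial : meanRelayDistance φ₀ D lam = ∫ ρ in Ioi 0, lam * ρ * exp (-a * ρ ^ 2) * S ρ := by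
    unfold meanRelayDistance
    congr 1 with ρ
    rw [← intervalIntegral.integral_const_mul]
    congr 1 with φ
    rw [ha_def]
    ring_nf
  set g := fun ρ => lam * ρ * exp (-a * ρ ^ 2) * (S ρ - φ₀ * D)
  set M := fun ρ => lam * φ₀ * (√a)⁻¹ * (ρ * exp (-(a / 2) * ρ ^ 2))
  have hM : IntegrableOn M (Ioi 0) :=
    (integrable_mul_exp_neg_mul_sq (half_pos ha)).integrableOn.const_mul _
  have hgM : ∀ᵐ ρ ∂(volume.restrict (Ioi 0)), ‖g ρ‖ ≤ M ρ := by
    refine (ae_restrict_iff' measurableSet_Ioi).2 (Eventually.of_forall fun ρ (hρ : 0 < ρ) => ?_)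
    calc ‖g ρ‖ = lam * ρ * exp (-a * ρ ^ 2) * |S ρ - φ₀ * D| := by
          simp only [g, norm_mul, norm_eq_abs, abs_of_pos hlam, abs_of_pos hρ, abs_exp]
      _ ≤ lam * ρ * exp (-a * ρ ^ 2) * (φ₀ * ρ) := by
          gcongr; exact abs_integral_sqrt_law_of_cosines_sub_le hρ.le hD hφ.le
      _ = lam * φ₀ * (ρ ^ 2 * exp (-a * ρ ^ 2)) := by ring
      _ ≤ M ρ := by
          simp only [M]
          rw [mul_assoc (lam * φ₀)]
          exact mul_le_mul_of_nonneg_left (sq_mul_exp_neg_mul_sq_le ha hρ.le) (by positivity)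
  have hg : IntegrableOn g (Ioi 0) := hM.mono' (by fun_prop) hgM
  have hmean : ∫ ρ in Ioi 0, lam * φ₀ * D * (ρ * exp (-a * ρ ^ 2)) = D := by
    rw [integral_const_mul, integral_Ioi_mul_exp_neg_mul_sq ha, ha_def]
    field_simp
  have hsub : meanRelayDistance φ₀ D lam - D = ∫ ρ in Ioi 0, g ρ := by
    have hsplit : ∀ ρ, lam * ρ * exp (-a * ρ ^ 2) * S ρ
        = g ρ + lam * φ₀ * D * (ρ * exp (-a * ρ ^ 2)) := fun ρ => by simp only [g]; ring
    rw [hradial]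
    simp_rw [hsplit]
    rw [integral_add hg ((integrable_mul_exp_neg_mul_sq ha).integrableOn.const_mul _), hmean]
    ring
  rw [hsub, ← norm_eq_abs]
  calc ‖∫ ρ in Ioi 0, g ρ‖ ≤ ∫ ρ in Ioi 0, M ρ := norm_integral_le_of_norm_le hM hgM
    _ = 2 / √a := by
        rw [integral_const_mul, integral_Ioi_mul_exp_neg_mul_sq (half_pos ha)]
        have hsa : 0 < √a := sqrt_pos.2 ha
        field_simp
        rw [ha_def]
        ring

lemma tendsto_meanRelayDistance_atTop {φ₀ D : ℝ} (hφ : 0 < φ₀) (hD : 0 ≤ D) :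
    Tendsto (meanRelayDistance φ₀ D) atTop (𝓝 D) := by
  have hbound : Tendsto (fun lam => 2 / √(lam * φ₀ / 2)) atTop (𝓝 0) :=
    tendsto_const_nhds.div_atTop
      (tendsto_sqrt_atTop.comp ((tendsto_id.atTop_mul_const hφ).atTop_div_const two_pos))
  rw [tendsto_iff_norm_sub_tendsto_zero]
  refine squeeze_zero' (Eventually.of_forall fun _ => norm_nonneg _) ?_ hbound
  filter_upwards [eventually_gt_atTop 0] with lam hlam
  exact abs_meanRelayDistance_sub_le hφ hD hlam

/-- `F(σ, p)` with `ν(p) = ν₀ + k p`, `A = A(σ)` and `w = 1 + (2-α)/(αD)·E(σ)`. -/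
noncomputable def outageBound (ν₀ k A w p : ℝ) : ℝ :=
  (1 - p) * (1 - exp (-(ν₀ + k * p))) +
    p * (2 - A / (A + 2 * (ν₀ + k * p)) - exp (-(ν₀ + k * p)) * (1 + (ν₀ + k * p) * w))

noncomputable def outageBoundDeriv (ν₀ k A w p : ℝ) : ℝ :=
  let q := ν₀ + k * p
  let G := exp (-q)
  (G - 1) + (1 - p) * (k * G) + (2 - A / (A + 2 * q) - G * (1 + q * w)) +
    p * (2 * k * A / (A + 2 * q) ^ 2 + k * G * (1 + q * w) - k * G * w)

noncomputable def outageBoundDeriv2 (ν₀ k A w p : ℝ) : ℝ :=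
  let q := ν₀ + k * p
  k * exp (-q) * (2 * (q - 1) * w + k * (p * (2 - q) * w - 1)) +
    4 * k * A / (A + 2 * q) ^ 2 - 8 * p * k ^ 2 * A / (A + 2 * q) ^ 3

section OutageBound

variable {ν₀ k A w p : ℝ}

lemma hasDerivAt_outageBound (hden : A + 2 * (ν₀ + k * p) ≠ 0) :
    HasDerivAt (outageBound ν₀ k A w) (outageBoundDeriv ν₀ k A w p) p := by
  have hq : HasDerivAt (fun x => ν₀ + k * x) k p := by
    simpa using ((hasDerivAt_id p).const_mul k).const_add ν₀
  have hG := hq.neg.exp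
  have hden' := (hq.const_mul 2).const_add A
  have h := (((hasDerivAt_id p).const_sub 1).mul (hG.const_sub 1)).add ((hasDerivAt_id p).mul
    (((hasDerivAt_const p 2).sub ((hasDerivAt_const p A).div hden' hden)).sub
      (hG.mul ((hq.mul_const w).const_add 1))))
  refine h.congr_deriv ?_
  simp only [outageBoundDeriv, Pi.sub_apply, Pi.mul_apply, Pi.div_apply, Pi.neg_apply, id]
  field_simp
  ring

lemma hasDerivAt_outageBoundDeriv (hden : A + 2 * (ν₀ + k * p) ≠ 0) :
    HasDerivAt (outageBoundDeriv ν₀ k A w) (outageBoundDeriv2 ν₀ k A w p) p := by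
  have hq : HasDerivAt (fun x => ν₀ + k * x) k p := by
    simpa using ((hasDerivAt_id p).const_mul k).const_add ν₀
  have hG := hq.neg.exp
  have hden' := (hq.const_mul 2).const_add A
  have hden2 := hden'.fun_pow 2
  have h := ((((hG.sub_const 1).add (((hasDerivAt_id p).const_sub 1).mul (hG.const_mul k))).add
    (((hasDerivAt_const p 2).sub ((hasDerivAt_const p A).div hden' hden)).sub
      (hG.mul ((hq.mul_const w).const_add 1)))).add ((hasDerivAt_id p).mul
    ((((hasDerivAt_const p (2 * k * A)).div hden2 (pow_ne_zero 2 hden)).add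
      ((hG.const_mul k).mul ((hq.mul_const w).const_add 1))).sub ((hG.const_mul k).mul_const w))))
  refine h.congr_deriv ?_
  simp only [outageBoundDeriv2, Pi.add_apply, Pi.sub_apply, Pi.mul_apply, Pi.div_apply,
    Pi.neg_apply, id, Nat.cast_ofNat]
  generalize A + 2 * (ν₀ + k * p) = d at hden ⊢
  field_simp
  ring

lemma outageBoundDeriv2_factor_le {b : ℝ} (h0 : 0 < ν₀) (h5 : 5 * ν₀ < 2) (hb0 : 0 < b)
    (hb1 : b ≤ 1) (hp0 : 0 ≤ p) (hp1 : p ≤ 1) :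
    2 * (ν₀ + ν₀ * b * p - 1) * w + ν₀ * b * (p * (2 - (ν₀ + ν₀ * b * p)) * w - 1)
      ≤ -(b * (2 - 5 * ν₀)) + 2 * (1 + ν₀ * b) * |w - b| := by
  set k := ν₀ * b
  set q := ν₀ + k * p
  have hk0 : 0 ≤ k := by positivity
  have hkb : k ≤ ν₀ := mul_le_of_le_one_right h0.le hb1
  have hkp : k * p ≤ ν₀ := (mul_le_of_le_one_right hk0 hp1).trans hkb
  have hq2 : q ≤ 2 * ν₀ := by linarith
  have hpq0 : 0 ≤ p * (2 - q) := mul_nonneg hp0 (by linarith)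
  have hpq2 : p * (2 - q) ≤ 2 := by nlinarith
  have hcoef : |2 * (q - 1) + k * (p * (2 - q))| ≤ 2 * (1 + k) := by
    rw [abs_le]; constructor <;> nlinarith
  have hmain : 2 * (q - 1) * b + k * (p * (2 - q)) * b - k ≤ -(b * (2 - 5 * ν₀)) := by
    have e1 : (q - 1) * b ≤ (2 * ν₀ - 1) * b := mul_le_mul_of_nonneg_right (by linarith) hb0.le
    have e2 : k * (p * (2 - q)) * b ≤ k * 2 * b := by gcongr
    have e3 : k * b ≤ ν₀ * b := mul_le_mul_of_nonneg_right hkb hb0.le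
    have e4 : k * b ≤ k := mul_le_of_le_one_right hk0 hb1
    linarith
  calc 2 * (q - 1) * w + k * (p * (2 - q) * w - 1)
      = (2 * (q - 1) + k * (p * (2 - q))) * (w - b)
        + (2 * (q - 1) * b + k * (p * (2 - q)) * b - k) := by ring
    _ ≤ |2 * (q - 1) + k * (p * (2 - q))| * |w - b| + -(b * (2 - 5 * ν₀)) := by
        rw [← abs_mul]; exact add_le_add (le_abs_self _) hmain
    _ ≤ -(b * (2 - 5 * ν₀)) + 2 * (1 + k) * |w - b| := by
        nlinarith [abs_nonneg (w - b)]

lemma div_sq_sub_div_cube_le {d : ℝ} (hk : 0 ≤ k) (hA : 0 < A) (hAd : A ≤ d) (hp : 0 ≤ p) :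
    4 * k * A / d ^ 2 - 8 * p * k ^ 2 * A / d ^ 3 ≤ 4 * k / A := by
  have hd : 0 < d := hA.trans_le hAd
  have h1 : 4 * k * A / d ^ 2 ≤ 4 * k / A := by
    rw [div_le_div_iff₀ (by positivity) hA]
    have : A * A ≤ d ^ 2 := by nlinarith
    nlinarith
  have h2 : 0 ≤ 8 * p * k ^ 2 * A / d ^ 3 := by positivity
  linarith

lemma outageBoundDeriv2_nonpos {b : ℝ} (h0 : 0 < ν₀) (h5 : 5 * ν₀ < 2) (hb0 : 0 < b)
    (hb1 : b ≤ 1) (hp0 : 0 ≤ p) (hp1 : p ≤ 1) (hA : 40 / (b * (2 - 5 * ν₀)) ≤ A)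
    (hw : |w - b| ≤ b * (2 - 5 * ν₀) / (4 * (1 + ν₀ * b))) :
    outageBoundDeriv2 ν₀ (ν₀ * b) A w p ≤ 0 := by
  set m := b * (2 - 5 * ν₀)
  have hm : 0 < m := mul_pos hb0 (by linarith)
  have hk : 0 < ν₀ * b := by positivity
  have hA0 : 0 < A := (by positivity : (0 : ℝ) < 40 / m).trans_le hA
  have hkp : 0 ≤ ν₀ * b * p := by positivity
  have hG : 1 / 5 ≤ exp (-(ν₀ + ν₀ * b * p)) := by
    have : ν₀ * b * p ≤ ν₀ :=
      (mul_le_of_le_one_right hk.le hp1).trans (mul_le_of_le_one_right h0.le hb1)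
    linarith [add_one_le_exp (-(ν₀ + ν₀ * b * p))]
  have hB : 2 * (ν₀ + ν₀ * b * p - 1) * w + ν₀ * b * (p * (2 - (ν₀ + ν₀ * b * p)) * w - 1)
      ≤ -(m / 2) := by
    have h := outageBoundDeriv2_factor_le (w := w) h0 h5 hb0 hb1 hp0 hp1
    rw [le_div_iff₀ (by positivity)] at hw
    linarith
  have hden := div_sq_sub_div_cube_le hk.le hA0 (d := A + 2 * (ν₀ + ν₀ * b * p))
    (by linarith) hp0
  have hAm : 4 * (ν₀ * b) / A ≤ ν₀ * b * m / 10 := by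
    rw [div_le_iff₀ hm] at hA
    rw [div_le_iff₀ hA0]
    nlinarith
  have hGB : exp (-(ν₀ + ν₀ * b * p)) * (2 * (ν₀ + ν₀ * b * p - 1) * w
      + ν₀ * b * (p * (2 - (ν₀ + ν₀ * b * p)) * w - 1)) ≤ 1 / 5 * -(m / 2) := by
    nlinarith
  have hkGB := mul_le_mul_of_nonneg_left hGB hk.le
  simp only [outageBoundDeriv2]
  linarith

lemma concaveOn_outageBound {b : ℝ} (h0 : 0 < ν₀) (h5 : 5 * ν₀ < 2) (hb0 : 0 < b)
    (hb1 : b ≤ 1) (hA : 40 / (b * (2 - 5 * ν₀)) ≤ A)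
    (hw : |w - b| ≤ b * (2 - 5 * ν₀) / (4 * (1 + ν₀ * b))) :
    ConcaveOn ℝ (Icc 0 1) (outageBound ν₀ (ν₀ * b) A w) := by
  have hm : 0 < b * (2 - 5 * ν₀) := mul_pos hb0 (by linarith)
  have hA0 : 0 < A := (div_pos (by norm_num) hm).trans_le hA
  have hden : ∀ p ∈ Icc (0 : ℝ) 1, A + 2 * (ν₀ + ν₀ * b * p) ≠ 0 := fun p hp => by
    have := hp.1; positivity
  refine concaveOn_of_hasDerivWithinAt2_nonpos (f' := outageBoundDeriv ν₀ (ν₀ * b) A w)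
    (f'' := outageBoundDeriv2 ν₀ (ν₀ * b) A w) (convex_Icc 0 1)
    (fun p hp => (hasDerivAt_outageBound (hden p hp)).continuousAt.continuousWithinAt)
    (fun p hp => ?_) (fun p hp => ?_) (fun p hp => ?_) <;>
  rw [interior_Icc] at hp
  · exact (hasDerivAt_outageBound (hden p (Ioo_subset_Icc_self hp))).hasDerivWithinAt
  · exact (hasDerivAt_outageBoundDeriv (hden p (Ioo_subset_Icc_self hp))).hasDerivWithinAt
  · exact outageBoundDeriv2_nonpos h0 h5 hb0 hb1 hp.1.le hp.2.le hA hw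

lemma eventually_concaveOn_outageBound {b : ℝ} (h0 : 0 < ν₀) (h5 : 5 * ν₀ < 2) (hb0 : 0 < b)
    (hb1 : b ≤ 1) :
    ∀ᶠ x : ℝ × ℝ in atTop ×ˢ 𝓝 b, ConcaveOn ℝ (Icc 0 1) (outageBound ν₀ (ν₀ * b) x.1 x.2) := by
  have hm : 0 < b * (2 - 5 * ν₀) := mul_pos hb0 (by linarith)
  have hball := Metric.closedBall_mem_nhds b (by positivity :
    0 < b * (2 - 5 * ν₀) / (4 * (1 + ν₀ * b)))
  filter_upwards [prod_mem_prod (Ici_mem_atTop (40 / (b * (2 - 5 * ν₀)))) hball]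
    with x ⟨hA, hw⟩
  exact concaveOn_outageBound h0 h5 hb0 hb1 hA hw

end OutageBound

theorem stmt_13_general (α D φ₀ ν₀ : ℝ) (hα : 2 < α) (hD : 0 < D) (hφ : 0 < φ₀)
    (h0 : 0 < ν₀) (h1 : ν₀ ≤ (3 - Real.sqrt 5) / 2)
    (lam A E ν : ℝ → ℝ) (F : ℝ → ℝ → ℝ)
    (hlam : ∀ σ, lam σ = 1 / (2 * π * σ ^ 2))
    (hA : ∀ σ, A σ = φ₀ * lam σ * D ^ 2)
    (hE : ∀ σ, E σ = ∫ ρ in Set.Ioi (0 : ℝ), ∫ φ in (-(φ₀ / 2))..(φ₀ / 2),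
        lam σ * ρ * exp (-(lam σ * φ₀ * ρ ^ 2) / 2) *
          Real.sqrt (ρ ^ 2 + D ^ 2 - 2 * ρ * D * cos φ))
    (hν : ∀ p, ν p = ν₀ * (1 + 2 * p / α))
    (hF : ∀ σ p, F σ p = (1 - p) * (1 - exp (-(ν p)))
        + p * (2 - A σ / (A σ + 2 * ν p)
            - exp (-(ν p)) * (1 + ν p * (1 + ((2 - α) / (α * D)) * E σ)))) :
    ∃ σc > 0, ∀ σ ∈ Set.Ioc (0 : ℝ) σc, ConcaveOn ℝ (Set.Icc 0 1) (F σ) := by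
  have hα0 : 0 < α := by linarith
  have h5 : 5 * ν₀ < 2 := by
    have : (11 / 5 : ℝ) < √5 := (lt_sqrt (by norm_num)).2 (by norm_num)
    linarith
  have hlam_top : Tendsto lam (𝓝[>] 0) atTop := by
    have h := ((tendsto_pow_atTop two_ne_zero).comp tendsto_inv_nhdsGT_zero).const_mul_atTop
      (inv_pos.2 (by positivity : (0 : ℝ) < 2 * π))
    refine h.congr fun σ => ?_
    rw [hlam, Function.comp_apply]
    field_simp
  have hA_top : Tendsto A (𝓝[>] 0) atTop :=
    ((hlam_top.const_mul_atTop hφ).atTop_mul_const (by positivity)).congr fun σ => (hA σ).symm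
  have hE_lim : Tendsto E (𝓝[>] 0) (𝓝 D) := by
    rw [show E = meanRelayDistance φ₀ D ∘ lam from funext hE]
    exact (tendsto_meanRelayDistance_atTop hφ hD.le).comp hlam_top
  have hw_lim : Tendsto (fun σ => 1 + (2 - α) / (α * D) * E σ) (𝓝[>] 0) (𝓝 (2 / α)) := by
    convert (hE_lim.const_mul ((2 - α) / (α * D))).const_add 1 using 2
    field_simp
    ring
  have hF_eq : ∀ σ, F σ = outageBound ν₀ (ν₀ * (2 / α)) (A σ) (1 + (2 - α) / (α * D) * E σ) := by
    intro σ
    ext p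
    rw [hF, hν, outageBound]
    ring_nf
  obtain ⟨σc, hσc, hconcave⟩ := mem_nhdsGT_iff_exists_Ioc_subset.1 <|
    (hA_top.prodMk hw_lim).eventually
      (eventually_concaveOn_outageBound h0 h5 (by positivity) ((div_le_one hα0).2 hα.le))
  exact ⟨σc, hσc, fun σ hσ => hF_eq σ ▸ hconcave hσ⟩

theorem stmt_13 (α D φ₀ ν₀ : ℝ) (hα : 2 < α) (hD : 0 < D) (hφ : 0 < φ₀)
    (hφ2 : φ₀ ≤ 2 * π) (h0 : 0 < ν₀) (h1 : ν₀ ≤ (3 - Real.sqrt 5) / 2)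
    (lam A E ν : ℝ → ℝ) (F : ℝ → ℝ → ℝ)
    (hlam : ∀ σ, lam σ = 1 / (2 * π * σ ^ 2))
    (hA : ∀ σ, A σ = φ₀ * lam σ * D ^ 2)
    (hE : ∀ σ, E σ = ∫ ρ in Set.Ioi (0 : ℝ), ∫ φ in (-(φ₀ / 2))..(φ₀ / 2),
        lam σ * ρ * exp (-(lam σ * φ₀ * ρ ^ 2) / 2) *
          Real.sqrt (ρ ^ 2 + D ^ 2 - 2 * ρ * D * cos φ))
    (hν : ∀ p, ν p = ν₀ * (1 + 2 * p / α))
    (hF : ∀ σ p, F σ p = (1 - p) * (1 - exp (-(ν p)))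
        + p * (2 - A σ / (A σ + 2 * ν p)
            - exp (-(ν p)) * (1 + ν p * (1 + ((2 - α) / (α * D)) * E σ)))) :
    ∃ σc > 0, ∀ σ ∈ Set.Ioc (0 : ℝ) σc, ConcaveOn ℝ (Set.Icc 0 1) (F σ) :=
  stmt_13_general α D φ₀ ν₀ hα hD hφ h0 h1 lam A E ν F hlam hA hE hν hF
end

section
/- Let α > 2 and φ₀ ∈ (0, 2π] be real numbers. Define erf(x) = (2/√π)·∫₀^x e^{−t²} dt, γ(s, φ₀) = √(π/2)·{1 + [8·(1 − cos(φ₀/4))/φ₀ − 2]·erf(1/(√2·s))} for s > 0, and φ_c = (1/4)·(1 − 2/α)·γ(1/√2, φ₀). Then for every s with 0 < s ≤ √(1/α + φ_c²) − φ_c, one has 2α·s² + (α − 2)·γ(s, φ₀)·s − 2 ≤ 0. -/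
open MeasureTheory Real

/-!
The coefficient `c(φ₀) = 8 (1 - cos (φ₀/4)) / φ₀ - 2` of `erf` in `γ` lies in `[-2, 0]`, so
`γ(·, φ₀)` is nondecreasing and bounded below by `-√(π/2)`. The lower bound places the threshold
`√(1/α + φ_c²) - φ_c` below `1/√2`, hence `γ(s, φ₀) ≤ γ(1/√2, φ₀) = 4 α φ_c / (α - 2)`, and the
claim reduces to `s² + 2 φ_c s ≤ 1/α`, which holds for `0 ≤ s` up to the positive root
`√(1/α + φ_c²) - φ_c`.
-/

lemma erf_monotone : Monotone erf := by
  intro a b hab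
  have hint : ∀ x y : ℝ, IntervalIntegrable (fun t : ℝ => exp (-t ^ 2)) volume x y :=
    fun x y => (by fun_prop : Continuous fun t : ℝ => exp (-t ^ 2)).intervalIntegrable x y
  have hab' : 0 ≤ ∫ t in a..b, exp (-t ^ 2) :=
    intervalIntegral.integral_nonneg hab fun t _ => (exp_pos _).le
  unfold erf
  rw [← intervalIntegral.integral_add_adjacent_intervals (hint 0 a) (hint a b)]
  gcongr
  linarith

lemma erf_nonneg {x : ℝ} (hx : 0 ≤ x) : 0 ≤ erf x :=
  mul_nonneg (by positivity) (intervalIntegral.integral_nonneg hx fun t _ => (exp_pos _).le)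

lemma erf_le_one {x : ℝ} (hx : 0 ≤ x) : erf x ≤ 1 := by
  have hint : IntegrableOn (fun t : ℝ => exp (-t ^ 2)) (Set.Ioi 0) := by
    simpa using (integrable_exp_neg_mul_sq one_pos).integrableOn
  have hle : ∫ t in (0:ℝ)..x, exp (-t ^ 2) ≤ ∫ t in Set.Ioi (0:ℝ), exp (-t ^ 2) := by
    rw [intervalIntegral.integral_of_le hx]
    exact setIntegral_mono_set hint (.of_forall fun t => (exp_pos _).le)
      (.of_forall fun t ht => ht.1)
  have hhalf : ∫ t in Set.Ioi (0:ℝ), exp (-t ^ 2) = √π / 2 := by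
    simpa using integral_gaussian_Ioi 1
  unfold erf
  rw [div_mul_eq_mul_div, div_le_one (by positivity)]
  nlinarith [sqrt_nonneg π]

noncomputable def apertureCoeff (φ₀ : ℝ) : ℝ := 8 * (1 - cos (φ₀ / 4)) / φ₀ - 2

lemma gammaFn_eq (s φ₀ : ℝ) :
    gammaFn s φ₀ = √(π / 2) * (1 + apertureCoeff φ₀ * erf (1 / (√2 * s))) := rfl

lemma neg_two_le_apertureCoeff {φ₀ : ℝ} (hφ : 0 ≤ φ₀) : -2 ≤ apertureCoeff φ₀ := by
  have : 0 ≤ 8 * (1 - cos (φ₀ / 4)) / φ₀ := div_nonneg (by linarith [cos_le_one (φ₀ / 4)]) hφ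
  unfold apertureCoeff
  linarith

lemma apertureCoeff_nonpos {φ₀ : ℝ} (hφ : 0 < φ₀) (hφ8 : φ₀ ≤ 8) : apertureCoeff φ₀ ≤ 0 := by
  have hcos := one_sub_sq_div_two_le_cos (x := φ₀ / 4)
  rw [apertureCoeff, sub_nonpos, div_le_iff₀ hφ]
  nlinarith

lemma monotoneOn_gammaFn {φ₀ : ℝ} (hφ : 0 < φ₀) (hφ8 : φ₀ ≤ 8) :
    MonotoneOn (gammaFn · φ₀) (Set.Ioi 0) := by
  intro s (hs : 0 < s) t _ hst
  have harg : 1 / (√2 * t) ≤ 1 / (√2 * s) := by gcongr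
  simp only [gammaFn_eq]
  gcongr ?_ * (1 + ?_)
  exact mul_le_mul_of_nonpos_left (erf_monotone harg) (apertureCoeff_nonpos hφ hφ8)

lemma neg_sqrt_le_gammaFn {φ₀ : ℝ} (hφ : 0 ≤ φ₀) {s : ℝ} (hs : 0 ≤ s) :
    -√(π / 2) ≤ gammaFn s φ₀ := by
  have harg : 0 ≤ 1 / (√2 * s) := by positivity
  have h0 := erf_nonneg harg
  have h1 := erf_le_one harg
  have hc := neg_two_le_apertureCoeff hφ
  have : -1 ≤ 1 + apertureCoeff φ₀ * erf (1 / (√2 * s)) := by nlinarith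
  rw [gammaFn_eq]
  nlinarith [sqrt_nonneg (π / 2)]

lemma sq_add_two_mul_le_of_le_sqrt_sub {p q s : ℝ} (hq : 0 ≤ q) (hs0 : 0 ≤ s)
    (hs : s ≤ √(q + p ^ 2) - p) : s ^ 2 + 2 * p * s ≤ q := by
  have hp : -√(q + p ^ 2) ≤ p := by
    have : |p| ≤ √(q + p ^ 2) := by
      rw [← sqrt_sq_eq_abs]; exact sqrt_le_sqrt (by linarith)
    exact (abs_le.mp this).1
  have : (s + p) ^ 2 ≤ √(q + p ^ 2) ^ 2 := sq_le_sq' (by linarith) (by linarith)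
  rw [sq_sqrt (by positivity)] at this
  linarith

lemma sqrt_sub_le_of_le_sq_add {p q t : ℝ} (htp : 0 ≤ t + p) (hq : q ≤ t ^ 2 + 2 * p * t) :
    √(q + p ^ 2) - p ≤ t := by
  have : √(q + p ^ 2) ≤ t + p := (sqrt_le_left htp).mpr (by linarith)
  linarith

lemma sqrt_sub_le_inv_sqrt_two {q p : ℝ} (hq : 0 < q) (hp : q - 1 / 2 ≤ √2 * p) :
    √(q + p ^ 2) - p ≤ 1 / √2 := by
  have h2 : √2 * √2 = 2 := mul_self_sqrt zero_le_two
  have hinv : 1 / √2 = √2 / 2 := by field_simp; rw [sq_sqrt zero_le_two]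
  rw [hinv]
  apply sqrt_sub_le_of_le_sq_add
  · nlinarith [sqrt_nonneg 2]
  · nlinarith

theorem stmt_15 (α φ₀ : ℝ) (hα : 2 < α) (hφ : 0 < φ₀) (hφ2 : φ₀ ≤ 2 * π)
    (φc : ℝ) (hφc : φc = (1 / 4) * (1 - 2 / α) * gammaFn (1 / Real.sqrt 2) φ₀)
    (s : ℝ) (hs0 : 0 < s) (hs : s ≤ Real.sqrt (1 / α + φc ^ 2) - φc) :
    2 * α * s ^ 2 + (α - 2) * gammaFn s φ₀ * s - 2 ≤ 0 := by
  have hφ8 : φ₀ ≤ 8 := by linarith [pi_le_four]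
  set G := gammaFn (1 / √2) φ₀
  have hG : -√2 ≤ G := by
    have : √(π / 2) ≤ √2 := sqrt_le_sqrt (by linarith [pi_le_four])
    linarith [neg_sqrt_le_gammaFn hφ.le (s := 1 / √2) (by positivity)]
  have hβ : 0 < 1 - 2 / α := by
    have : 2 / α < 1 := (div_lt_one (by linarith)).mpr hα
    linarith
  have hφc_lb : 1 / α - 1 / 2 ≤ √2 * φc := by
    have : -2 ≤ √2 * G := by
      simpa using mul_le_mul_of_nonneg_left hG (sqrt_nonneg 2)
    rw [hφc]
    linear_combination (1 / 4) * mul_le_mul_of_nonneg_left this hβ.le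
  have hγ : gammaFn s φ₀ ≤ G :=
    monotoneOn_gammaFn hφ hφ8 hs0 (by positivity : (0:ℝ) < 1 / √2)
      (hs.trans (sqrt_sub_le_inv_sqrt_two (by positivity) hφc_lb))
  have hquad : s ^ 2 + 2 * φc * s ≤ 1 / α :=
    sq_add_two_mul_le_of_le_sqrt_sub (by positivity) hs0.le hs
  have hG4 : (α - 2) * G = 4 * α * φc := by
    rw [hφc]; field_simp
  calc 2 * α * s ^ 2 + (α - 2) * gammaFn s φ₀ * s - 2
      ≤ 2 * α * s ^ 2 + (α - 2) * G * s - 2 := by gcongr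
    _ = 2 * α * (s ^ 2 + 2 * φc * s - 1 / α) := by rw [hG4]; field_simp; ring
    _ ≤ 0 := mul_nonpos_of_nonneg_of_nonpos (by positivity) (by linarith)
end
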